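/- arXiv:1802.00831 — 11 statements merged into one kernel-verified Lean document; each statement's English description precedes it below -/
import Mathlib

section
/- Let K be a field of characteristic zero and let f ∈ K[x] with deg f ≥ 2. Define the K-derivation δ on K[x,y] by δ(x) = y and δ(y) = f. If γ is a K-derivation on K[x,y] with γ(x) = c₁y + c₀ and γ(y) = d₁y + d₀ for c₁, c₀, d₁, d₀ ∈ K[x], and γ commutes with δ, then c₁ is a constant, c₀ = d₁ = 0, and d₀ = c₁f; that is, γ = c₁·δ. -/
open MvPolynomial

private lemma quadY {R : Type*} [CommRing R] {a b c a' b' c' : R}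
    (h : Polynomial.C a * Polynomial.X ^ 2 + Polynomial.C b * Polynomial.X + Polynomial.C c
      = Polynomial.C a' * Polynomial.X ^ 2 + Polynomial.C b' * Polynomial.X + Polynomial.C c') :
    a = a' ∧ b = b' ∧ c = c' := by
  refine ⟨?_, ?_, ?_⟩
  · have := congrArg (fun q => q.coeff 2) h
    simpa [Polynomial.coeff_X, Polynomial.coeff_X_pow, Polynomial.coeff_C] using this
  · have := congrArg (fun q => q.coeff 1) h
    simpa [Polynomial.coeff_X, Polynomial.coeff_X_pow, Polynomial.coeff_C] using this
  · have := congrArg (fun q => q.coeff 0) h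
    simpa [Polynomial.coeff_X, Polynomial.coeff_X_pow, Polynomial.coeff_C] using this

/-- If `δ(x) = y`, `δ(y) = f` with `deg f ≥ 2`, and `γ(x) = c₁y + c₀`,
`γ(y) = d₁y + d₀` commutes with `δ`, then `c₁` is constant, `c₀ = d₁ = 0`, `d₀ = c₁f`,
i.e. `γ = c₁·δ`. -/
theorem stmt0 (K : Type*) [Field K] [CharZero K]
    (f c1 c0 d1 d0 : Polynomial K) (hf : 2 ≤ f.natDegree)
    (δ γ : Derivation K (MvPolynomial (Fin 2) K) (MvPolynomial (Fin 2) K))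
    (hδx : δ (X 0) = X 1)
    (hδy : δ (X 1) = Polynomial.aeval (X 0 : MvPolynomial (Fin 2) K) f)
    (hγx : γ (X 0) = Polynomial.aeval (X 0 : MvPolynomial (Fin 2) K) c1 * X 1
      + Polynomial.aeval (X 0 : MvPolynomial (Fin 2) K) c0)
    (hγy : γ (X 1) = Polynomial.aeval (X 0 : MvPolynomial (Fin 2) K) d1 * X 1
      + Polynomial.aeval (X 0 : MvPolynomial (Fin 2) K) d0)
    (hcomm : ∀ p, δ (γ p) = γ (δ p)) :
    (∃ a : K, c1 = Polynomial.C a) ∧ c0 = 0 ∧ d1 = 0 ∧ d0 = c1 * f ∧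
      γ = Polynomial.aeval (X 0 : MvPolynomial (Fin 2) K) c1 • δ := by
  have hDδ : ∀ p : Polynomial K, δ (Polynomial.aeval (X 0 : MvPolynomial (Fin 2) K) p)
      = Polynomial.aeval (X 0 : MvPolynomial (Fin 2) K) p.derivative * X 1 := by
    intro p
    rw [Derivation.map_aeval, hδx, smul_eq_mul]
  set φ : MvPolynomial (Fin 2) K →ₐ[K] Polynomial (Polynomial K) :=
    MvPolynomial.aeval ![Polynomial.C Polynomial.X, Polynomial.X] with hφdef
  have hφ0 : φ (X 0) = Polynomial.C Polynomial.X := by simp [hφdef]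
  have hφ1 : φ (X 1) = Polynomial.X := by simp [hφdef]
  have hφA : ∀ p : Polynomial K,
      φ (Polynomial.aeval (X 0 : MvPolynomial (Fin 2) K) p) = Polynomial.C p := by
    intro p
    rw [← Polynomial.aeval_algHom_apply, hφ0]
    have h2 : Polynomial.C (Polynomial.X : Polynomial K)
        = Polynomial.CAlgHom (R := K) (Polynomial.X : Polynomial K) := rfl
    rw [h2, Polynomial.aeval_algHom_apply, Polynomial.aeval_X_left_apply]
    rfl
  -- first commutation relation
  have e1 := hcomm (X 0)
  rw [hδx, hγx, hγy, map_add, Derivation.leibniz, hDδ, hDδ, hδy, smul_eq_mul, smul_eq_mul] at e1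
  have E1 := congrArg φ e1
  simp only [map_add, map_mul, hφA, hφ1] at E1
  have E1' : Polynomial.C c1.derivative * Polynomial.X ^ 2
      + Polynomial.C c0.derivative * Polynomial.X + Polynomial.C (c1 * f)
      = Polynomial.C (0 : Polynomial K) * Polynomial.X ^ 2
      + Polynomial.C d1 * Polynomial.X + Polynomial.C d0 := by
    rw [Polynomial.C_mul, map_zero]
    linear_combination E1
  obtain ⟨h1, h2, h3⟩ := quadY E1'
  -- second commutation relation
  have e2 := hcomm (X 1)
  rw [hδy, hγy, map_add, Derivation.leibniz, hDδ, hDδ, hδy, smul_eq_mul, smul_eq_mul,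
    Derivation.map_aeval, hγx, smul_eq_mul] at e2
  have E2 := congrArg φ e2
  simp only [map_add, map_mul, hφA, hφ1] at E2
  have E2' : Polynomial.C d1.derivative * Polynomial.X ^ 2
      + Polynomial.C d0.derivative * Polynomial.X + Polynomial.C (d1 * f)
      = Polynomial.C (0 : Polynomial K) * Polynomial.X ^ 2
      + Polynomial.C (f.derivative * c1) * Polynomial.X + Polynomial.C (f.derivative * c0) := by
    rw [Polynomial.C_mul, Polynomial.C_mul, Polynomial.C_mul, map_zero]
    linear_combination E2
  obtain ⟨h4, h5, h6⟩ := quadY E2'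
  -- polynomial algebra
  have hfne : f ≠ 0 := fun h => by simp [h] at hf
  have hc1 : c1 = Polynomial.C (c1.coeff 0) := Polynomial.eq_C_of_derivative_eq_zero h1
  have hd1 : d1 = Polynomial.C (d1.coeff 0) := Polynomial.eq_C_of_derivative_eq_zero h4
  set b := d1.coeff 0 with hb
  have hc0d : (c0 - Polynomial.C b * Polynomial.X).derivative = 0 := by
    rw [Polynomial.derivative_sub, Polynomial.derivative_mul, Polynomial.derivative_C,
      Polynomial.derivative_X, h2, hd1]
    ring
  have hc0 : c0 = Polynomial.C b * Polynomial.X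
      + Polynomial.C ((c0 - Polynomial.C b * Polynomial.X).coeff 0) := by
    have := Polynomial.eq_C_of_derivative_eq_zero hc0d
    linear_combination this
  set e := (c0 - Polynomial.C b * Polynomial.X).coeff 0 with he
  set n := f.natDegree with hn
  have hL : f.coeff n ≠ 0 := by
    rw [hn]
    exact fun h => hfne (Polynomial.leadingCoeff_eq_zero.mp h)
  have hn2 : n - 1 + 1 = n := by omega
  have hb0 : b = 0 := by
    have h6' : Polynomial.C b * f
        = Polynomial.C b * (f.derivative * Polynomial.X) + Polynomial.C e * f.derivative := by
      linear_combination h6 + f.derivative * hc0 - f * hd1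
    have hcoeff := congrArg (fun q => q.coeff n) h6'
    simp only [Polynomial.coeff_add, Polynomial.coeff_C_mul] at hcoeff
    have hXc : (f.derivative * Polynomial.X).coeff n = f.derivative.coeff (n - 1) := by
      conv_lhs => rw [← hn2]
      exact Polynomial.coeff_mul_X _ _
    have hdc : f.derivative.coeff (n - 1) = f.coeff n * (((n - 1 : ℕ) : K) + 1) := by
      rw [Polynomial.coeff_derivative, hn2]
    have hdn : f.derivative.coeff n = 0 :=
      Polynomial.coeff_eq_zero_of_natDegree_lt
        (lt_of_le_of_lt (Polynomial.natDegree_derivative_le f) (by omega))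
    rw [hXc, hdc, hdn, mul_zero, add_zero] at hcoeff
    have hz : b * (f.coeff n * ((n - 1 : ℕ) : K)) = 0 := by linear_combination -hcoeff
    have hm : ((n - 1 : ℕ) : K) ≠ 0 := Nat.cast_ne_zero.mpr (by omega)
    rcases mul_eq_zero.mp hz with hb' | hc
    · exact hb'
    · rcases mul_eq_zero.mp hc with h' | h'
      · exact absurd h' hL
      · exact absurd h' hm
  have hd1z : d1 = 0 := by rw [hd1, hb0]; simp
  have hfd : f.derivative ≠ 0 := fun h => by
    have := Polynomial.natDegree_eq_zero_of_derivative_eq_zero h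
    omega
  have hc0z : c0 = 0 := by
    have h6z : f.derivative * c0 = 0 := by rw [← h6, hd1z, zero_mul]
    rcases mul_eq_zero.mp h6z with h' | h'
    · exact absurd h' hfd
    · exact h'
  refine ⟨⟨c1.coeff 0, hc1⟩, hc0z, hd1z, h3.symm, ?_⟩
  apply MvPolynomial.derivation_ext
  intro i
  fin_cases i
  · show γ (X 0) = (Polynomial.aeval (X 0 : MvPolynomial (Fin 2) K) c1 • δ) (X 0)
    rw [Derivation.smul_apply, hγx, hc0z, hδx]
    simp [smul_eq_mul]
  · show γ (X 1) = (Polynomial.aeval (X 0 : MvPolynomial (Fin 2) K) c1 • δ) (X 1)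
    rw [Derivation.smul_apply, hγy, hd1z, ← h3, hδy]
    simp [smul_eq_mul, mul_comm]
end

section
/- Every nonzero K-derivation d on K[x,y] of degree at most 1 (i.e., d(x) and d(y) are polynomials of total degree ≤ 1) admits a K-derivation δ on K[x,y] commuting with d such that d and δ are linearly independent over K(x,y). (Here K is a field of characteristic 0.) -/
/-!
Write `d(x) = a + B x` with `a ∈ K²` and `B ∈ M₂(K)`. The derivation `δ` with `δ(x) = f` commutes
with `d` as soon as `d(f) = B f`, and it is independent of `d` over `K(x,y)` as soon as the
polynomial `d(x₀) f₁ - d(x₁) f₀` is nonzero. If `a = B p`, then in the coordinates `y = x + p`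
we have `d = B y ∂`: for `B` not scalar the Euler field `y ∂` works, and for `B = c I` (with
`c ≠ 0`, as `d ≠ 0`) the field `y₀ ∂₁` does. If `a ∉ B K²`, then `B` is singular and a constant
field `v ∂` with `B v = 0` commutes with `d`; for `B ≠ 0` it can only be dependent on `d` if `a`
and `B K²` both lie on the line `K v`, which would put `a` in `B K²`, and for `B = 0` any `v` not
parallel to `a` works.
-/

open MvPolynomial
open scoped Matrix

theorem MvPolynomial.eq_C_add_sum_C_mul_X_of_totalDegree_le_one {R σ : Type*} [CommSemiring R]
    [Fintype σ] {p : MvPolynomial σ R} (hp : p.totalDegree ≤ 1) :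
    p = C (p.coeff 0) + ∑ i, C (p.coeff (Finsupp.single i 1)) * X i := by
  classical
  ext m
  simp only [coeff_add, coeff_C, coeff_sum, coeff_C_mul, coeff_X]
  rcases Nat.lt_or_ge 1 m.degree with hm | hm
  · have h₀ : m ≠ 0 := by rintro rfl; simp at hm
    have h₁ : ∀ i, Finsupp.single i 1 ≠ m := by rintro i rfl; simp at hm
    rw [coeff_eq_zero_of_totalDegree_lt (hp.trans_lt hm)]
    simp [Ne.symm h₀, h₁]
  rcases Nat.le_one_iff_eq_zero_or_eq_one.mp hm with hm | hm
  · rw [Finsupp.degree_eq_zero_iff] at hm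
    subst hm
    simp
  · obtain ⟨k, rfl⟩ : m ∈ Set.range (Finsupp.single · 1) := by
      rw [Finsupp.range_single_one]; exact hm
    simp [Finsupp.single_left_inj, eq_comm (a := (0 : σ →₀ ℕ))]

theorem MvPolynomial.derivation_C_add_sum_C_mul_X {R σ : Type*} [CommSemiring R] [Fintype σ]
    (D : Derivation R (MvPolynomial σ R) (MvPolynomial σ R)) (c : R) (e : σ → R) :
    D (C c + ∑ i, C (e i) * X i) = ∑ i, C (e i) * D (X i) := by
  simp [Derivation.leibniz, derivation_C, smul_eq_mul]

theorem MvPolynomial.derivation_comm_of_comm_X {R σ : Type*} [CommRing R]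
    {d δ : Derivation R (MvPolynomial σ R) (MvPolynomial σ R)}
    (h : ∀ i, d (δ (X i)) = δ (d (X i))) (p : MvPolynomial σ R) : d (δ p) = δ (d p) := by
  have hbr : ⁅d, δ⁆ = 0 := derivation_ext fun i => by
    simp [Derivation.commutator_apply, h]
  simpa [Derivation.commutator_apply, sub_eq_zero] using DFunLike.congr_fun hbr p

theorem not_exists_proportional_of_cross_ne_zero {R A : Type*} [CommRing R] [CommRing A]
    [Algebra R A] (hinj : Function.Injective (algebraMap R A)) {u₀ u₁ v₀ v₁ : R}
    (h : u₀ * v₁ - u₁ * v₀ ≠ 0) :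
    ¬∃ g : A,
      (algebraMap R A v₀ = g * algebraMap R A u₀ ∧ algebraMap R A v₁ = g * algebraMap R A u₁) ∨
      (algebraMap R A u₀ = g * algebraMap R A v₀ ∧ algebraMap R A u₁ = g * algebraMap R A v₁) := by
  rintro ⟨g, ⟨h₀, h₁⟩ | ⟨h₀, h₁⟩⟩ <;> refine h (hinj ?_) <;> simp only [map_sub, map_mul, map_zero]
  · linear_combination algebraMap R A u₀ * h₁ - algebraMap R A u₁ * h₀
  · linear_combination algebraMap R A v₁ * h₀ - algebraMap R A v₀ * h₁

theorem exists_eq_smul_of_cross_eq_zero {K : Type*} [Field K] {u v : Fin 2 → K} (hv : v ≠ 0)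
    (h : u 0 * v 1 - u 1 * v 0 = 0) : ∃ t : K, u = t • v := by
  by_cases h₀ : v 0 = 0
  · have h₁ : v 1 ≠ 0 := fun h₁ => hv (by ext i; fin_cases i <;> assumption)
    refine ⟨u 1 / v 1, funext_iff.mpr (Fin.forall_fin_two.mpr ⟨?_, ?_⟩)⟩ <;>
      simp only [Pi.smul_apply, smul_eq_mul]
    · field_simp; linear_combination h
    · field_simp
  · refine ⟨u 0 / v 0, funext_iff.mpr (Fin.forall_fin_two.mpr ⟨?_, ?_⟩)⟩ <;>
      simp only [Pi.smul_apply, smul_eq_mul]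
    · field_simp
    · field_simp; linear_combination -h

namespace AffineDerivation

variable {K : Type*} [Field K] {d : Derivation K (MvPolynomial (Fin 2) K) (MvPolynomial (Fin 2) K)}
  {a : Fin 2 → K} {B : Matrix (Fin 2) (Fin 2) K}

def IsTransversalSymmetry (d δ : Derivation K (MvPolynomial (Fin 2) K) (MvPolynomial (Fin 2) K)) :
    Prop :=
  (∀ p, d (δ p) = δ (d p)) ∧ d (X 0) * δ (X 1) - d (X 1) * δ (X 0) ≠ 0

theorem eval_apply_X (hdX : ∀ i, d (X i) = C (a i) + ∑ j, C (B i j) * X j)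
    (x : Fin 2 → K) (i : Fin 2) : eval x (d (X i)) = a i + (B *ᵥ x) i := by
  simp [hdX, Matrix.mulVec, dotProduct]

theorem isTransversalSymmetry_mkDerivation
    (hdX : ∀ i, d (X i) = C (a i) + ∑ j, C (B i j) * X j) {f : Fin 2 → MvPolynomial (Fin 2) K}
    (hf : ∀ i, d (f i) = ∑ j, C (B i j) * f j) (hW : d (X 0) * f 1 - d (X 1) * f 0 ≠ 0) :
    IsTransversalSymmetry d (mkDerivation K f) := by
  refine ⟨derivation_comm_of_comm_X fun i => ?_, by simpa [mkDerivation_X] using hW⟩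
  rw [mkDerivation_X, hf, hdX, derivation_C_add_sum_C_mul_X]
  simp [mkDerivation_X]

theorem exists_isTransversalSymmetry_of_scalar
    (hdX : ∀ i, d (X i) = C (a i) + ∑ j, C (B i j) * X j) {p : Fin 2 → K} (hp : B *ᵥ p = a)
    {c : K} (hB : B = Matrix.scalar (Fin 2) c) (hc : c ≠ 0) : ∃ δ, IsTransversalSymmetry d δ := by
  have hdX₀ : d (X 0) = C c * (X 0 + C (p 0)) := by
    simp [hdX, ← hp, hB, mul_add, add_comm]
  refine ⟨_, isTransversalSymmetry_mkDerivation hdX (f := ![0, X 0 + C (p 0)]) ?_ ?_⟩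
  · intro i; fin_cases i <;> simp [hB, hdX₀, derivation_C]
  · exact fun hW => hc (by simpa [hdX₀] using congrArg (eval ![1 - p 0, 0]) hW)

theorem exists_isTransversalSymmetry_of_not_scalar
    (hdX : ∀ i, d (X i) = C (a i) + ∑ j, C (B i j) * X j) {p : Fin 2 → K} (hp : B *ᵥ p = a)
    (hB : B ∉ Set.range (Matrix.scalar (Fin 2))) : ∃ δ, IsTransversalSymmetry d δ := by
  refine ⟨_, isTransversalSymmetry_mkDerivation hdX (f := fun i => X i + C (p i)) ?_ ?_⟩
  · intro i
    rw [map_add, derivation_C, add_zero, hdX, ← hp]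
    simp [Matrix.mulVec, dotProduct, mul_add, Finset.sum_add_distrib, add_comm]
  · intro hW
    have cross : ∀ e : Fin 2 → K, (B *ᵥ e) 0 * e 1 - (B *ᵥ e) 1 * e 0 = 0 := fun e => by
      simpa [eval_apply_X hdX, ← hp, Matrix.mulVec_sub] using congrArg (eval (e - p)) hW
    have h₁ : B 1 0 = 0 := by simpa [Matrix.mulVec, dotProduct] using cross ![1, 0]
    have h₂ : B 0 1 = 0 := by simpa [Matrix.mulVec, dotProduct] using cross ![0, 1]
    have h₃ : B 0 0 + B 0 1 - (B 1 0 + B 1 1) = 0 := by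
      simpa [Matrix.mulVec, dotProduct] using cross ![1, 1]
    have h₄ : B 1 1 = B 0 0 := by linear_combination h₂ - h₁ - h₃
    refine hB ⟨B 0 0, ?_⟩
    ext i j
    fin_cases i <;> fin_cases j <;> simp [h₁, h₂, h₄]

theorem exists_isTransversalSymmetry_of_linearPart_eq_zero
    (hdX : ∀ i, d (X i) = C (a i) + ∑ j, C (B i j) * X j) (hB : B = 0) (ha : a ≠ 0) :
    ∃ δ, IsTransversalSymmetry d δ := by
  obtain ⟨v, hv⟩ : ∃ v : Fin 2 → K, a 0 * v 1 - a 1 * v 0 ≠ 0 := by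
    by_cases h₀ : a 0 = 0
    · refine ⟨![-1, 0], ?_⟩
      simpa using fun h₁ => ha (by ext i; fin_cases i <;> assumption)
    · exact ⟨![0, 1], by simpa using h₀⟩
  refine ⟨_, isTransversalSymmetry_mkDerivation hdX (f := fun i => C (v i)) ?_ ?_⟩
  · simp [hB, derivation_C]
  · intro hW
    have := congrArg (eval 0) hW
    simp only [map_sub, map_mul, eval_apply_X hdX, eval_C, hB, Matrix.zero_mulVec, Pi.zero_apply,
      add_zero, map_zero] at this
    exact hv this

theorem exists_isTransversalSymmetry_of_not_mem_range
    (hdX : ∀ i, d (X i) = C (a i) + ∑ j, C (B i j) * X j) (ha : a ∉ Set.range B.mulVec)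
    (hB : B ≠ 0) : ∃ δ, IsTransversalSymmetry d δ := by
  have hdet : B.det = 0 := by
    by_contra hdet
    exact ha ⟨B⁻¹ *ᵥ a, by
      rw [Matrix.mulVec_mulVec, Matrix.mul_nonsing_inv _ (isUnit_iff_ne_zero.mpr hdet),
        Matrix.one_mulVec]⟩
  obtain ⟨v, hv, hBv⟩ := Matrix.exists_mulVec_eq_zero_iff.mpr hdet
  refine ⟨_, isTransversalSymmetry_mkDerivation hdX (f := fun i => C (v i)) ?_ ?_⟩
  · intro i
    have := congrArg (C : K → MvPolynomial (Fin 2) K) (congrFun hBv i)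
    simp only [Matrix.mulVec, dotProduct, Pi.zero_apply, map_sum, map_mul, map_zero] at this
    rw [derivation_C, this]
  · intro hW
    have cross : ∀ x, (a + B *ᵥ x) 0 * v 1 - (a + B *ᵥ x) 1 * v 0 = 0 := fun x => by
      simpa [eval_apply_X hdX] using congrArg (eval x) hW
    obtain ⟨x, hx⟩ : ∃ x, B *ᵥ x ≠ 0 := by
      by_contra! h
      exact hB (Matrix.ext_iff_mulVec.mpr fun x => by simp [h])
    have cross₀ := cross 0
    simp only [Matrix.mulVec_zero, add_zero] at cross₀
    have crossₓ := cross x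
    simp only [Pi.add_apply] at crossₓ
    obtain ⟨s, hs⟩ := exists_eq_smul_of_cross_eq_zero hv cross₀
    obtain ⟨t, ht⟩ := exists_eq_smul_of_cross_eq_zero hv (u := B *ᵥ x)
      (by linear_combination crossₓ - cross₀)
    have ht₀ : t ≠ 0 := by rintro rfl; exact hx (by simp [ht])
    exact ha ⟨(s / t) • x, by rw [Matrix.mulVec_smul, ht, hs, smul_smul, div_mul_cancel₀ _ ht₀]⟩

theorem exists_isTransversalSymmetry (hdX : ∀ i, d (X i) = C (a i) + ∑ j, C (B i j) * X j)
    (hd : d ≠ 0) : ∃ δ, IsTransversalSymmetry d δ := by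
  by_cases ha : a ∈ Set.range B.mulVec
  · obtain ⟨p, hp⟩ := ha
    by_cases hB : B ∈ Set.range (Matrix.scalar (Fin 2))
    · obtain ⟨c, hc⟩ := hB
      refine exists_isTransversalSymmetry_of_scalar hdX hp hc.symm fun hc₀ => hd ?_
      exact derivation_ext fun i => by simp [hdX, ← hp, ← hc, hc₀]
    · exact exists_isTransversalSymmetry_of_not_scalar hdX hp hB
  · by_cases hB : B = 0
    · exact exists_isTransversalSymmetry_of_linearPart_eq_zero hdX hB
        (by rintro rfl; exact ha ⟨0, by simp⟩)
    · exact exists_isTransversalSymmetry_of_not_mem_range hdX ha hB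

end AffineDerivation

theorem stmt3_general (K : Type*) [Field K]
    (d : Derivation K (MvPolynomial (Fin 2) K) (MvPolynomial (Fin 2) K))
    (hd : d ≠ 0)
    (hdegx : (d (X 0)).totalDegree ≤ 1) (hdegy : (d (X 1)).totalDegree ≤ 1) :
    ∃ δ : Derivation K (MvPolynomial (Fin 2) K) (MvPolynomial (Fin 2) K),
      (∀ p, d (δ p) = δ (d p)) ∧
      ¬ ∃ g : FractionRing (MvPolynomial (Fin 2) K),
        ((algebraMap (MvPolynomial (Fin 2) K) (FractionRing (MvPolynomial (Fin 2) K)) (δ (X 0))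
            = g * algebraMap (MvPolynomial (Fin 2) K) (FractionRing (MvPolynomial (Fin 2) K)) (d (X 0)) ∧
          algebraMap (MvPolynomial (Fin 2) K) (FractionRing (MvPolynomial (Fin 2) K)) (δ (X 1))
            = g * algebraMap (MvPolynomial (Fin 2) K) (FractionRing (MvPolynomial (Fin 2) K)) (d (X 1))) ∨
         (algebraMap (MvPolynomial (Fin 2) K) (FractionRing (MvPolynomial (Fin 2) K)) (d (X 0))
            = g * algebraMap (MvPolynomial (Fin 2) K) (FractionRing (MvPolynomial (Fin 2) K)) (δ (X 0)) ∧
          algebraMap (MvPolynomial (Fin 2) K) (FractionRing (MvPolynomial (Fin 2) K)) (d (X 1))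
            = g * algebraMap (MvPolynomial (Fin 2) K) (FractionRing (MvPolynomial (Fin 2) K)) (δ (X 1)))) := by
  obtain ⟨a, B, hdX⟩ : ∃ (a : Fin 2 → K) (B : Matrix (Fin 2) (Fin 2) K),
      ∀ i, d (X i) = C (a i) + ∑ j, C (B i j) * X j := by
    refine ⟨fun i => (d (X i)).coeff 0,
      Matrix.of fun i j => (d (X i)).coeff (Finsupp.single j 1), fun i => ?_⟩
    fin_cases i
    exacts [eq_C_add_sum_C_mul_X_of_totalDegree_le_one hdegx,
      eq_C_add_sum_C_mul_X_of_totalDegree_le_one hdegy]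
  obtain ⟨δ, hcomm, hW⟩ := AffineDerivation.exists_isTransversalSymmetry hdX hd
  exact ⟨δ, hcomm, not_exists_proportional_of_cross_ne_zero (IsFractionRing.injective _ _) hW⟩

/-- Every nonzero `K`-derivation on `K[x,y]` of degree ≤ 1 admits a commuting
derivation linearly independent from it over `K(x,y)`. -/
theorem stmt3 (K : Type*) [Field K] [CharZero K]
    (d : Derivation K (MvPolynomial (Fin 2) K) (MvPolynomial (Fin 2) K))
    (hd : d ≠ 0)
    (hdegx : (d (X 0)).totalDegree ≤ 1) (hdegy : (d (X 1)).totalDegree ≤ 1) :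
    ∃ δ : Derivation K (MvPolynomial (Fin 2) K) (MvPolynomial (Fin 2) K),
      (∀ p, d (δ p) = δ (d p)) ∧
      ¬ ∃ g : FractionRing (MvPolynomial (Fin 2) K),
        ((algebraMap (MvPolynomial (Fin 2) K) (FractionRing (MvPolynomial (Fin 2) K)) (δ (X 0))
            = g * algebraMap (MvPolynomial (Fin 2) K) (FractionRing (MvPolynomial (Fin 2) K)) (d (X 0)) ∧
          algebraMap (MvPolynomial (Fin 2) K) (FractionRing (MvPolynomial (Fin 2) K)) (δ (X 1))
            = g * algebraMap (MvPolynomial (Fin 2) K) (FractionRing (MvPolynomial (Fin 2) K)) (d (X 1))) ∨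
         (algebraMap (MvPolynomial (Fin 2) K) (FractionRing (MvPolynomial (Fin 2) K)) (d (X 0))
            = g * algebraMap (MvPolynomial (Fin 2) K) (FractionRing (MvPolynomial (Fin 2) K)) (δ (X 0)) ∧
          algebraMap (MvPolynomial (Fin 2) K) (FractionRing (MvPolynomial (Fin 2) K)) (d (X 1))
            = g * algebraMap (MvPolynomial (Fin 2) K) (FractionRing (MvPolynomial (Fin 2) K)) (δ (X 1)))) :=
  stmt3_general K d hd hdegx hdegy
end

section
/- Fix an odd integer m ≥ 3 and f ∈ K[x] with deg f ≥ 2, over a field K of characteristic zero. The solution set of the system (Io)_m — namely c_m' = 0; d_{m-1}' = f'c_m; c_{m-2}' + m f c_m = d_{m-1}; d_{m-3}' + (m-1) f d_{m-1} = f' c_{m-2}; ...; c_{k-1}' + (k+1) f c_{k+1} = d_k and d_{k-1}' + (k+1) f d_{k+1} = f' c_k alternating down to d_0' + 2 f d_2 = f' c_1 and f c_1 = d_0 — viewed as a subset of K[x]^{m+1} in the unknowns (d_0, c_1, d_2, c_3, ..., d_{m-1}, c_m), is a K-vector space of dimension (m+1)/2. -/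
open Polynomial

namespace Stmt6Aux

variable {K : Type*} [Field K] [CharZero K]

lemma poly_eq_zero {p : Polynomial K} (h : derivative p = 0) (h0 : p.coeff 0 = 0) : p = 0 := by
  have h1 := Polynomial.eq_C_of_natDegree_eq_zero (natDegree_eq_zero_of_derivative_eq_zero h)
  rw [h1, h0, map_zero]

lemma exists_antideriv (f : Polynomial K) :
    ∃ F : Polynomial K, derivative F = f ∧ F.coeff 0 = 0 := by
  refine ⟨f.sum fun n a => C (a / (n + 1)) * X ^ (n + 1), ?_, ?_⟩
  · rw [Polynomial.sum, map_sum]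
    conv_rhs => rw [← Polynomial.sum_C_mul_X_pow_eq f, Polynomial.sum]
    refine Finset.sum_congr rfl fun n _ => ?_
    have h : ((n : K) + 1) ≠ 0 := Nat.cast_add_one_ne_zero n
    rw [derivative_C_mul_X_pow, Nat.add_sub_cancel]
    congr 1
    push_cast
    field_simp
  · rw [Polynomial.sum]
    rw [Polynomial.finset_sum_coeff]
    refine Finset.sum_eq_zero fun n _ => ?_
    simp [coeff_X_pow]

noncomputable def cpart (F : Polynomial K) (s t : ℕ) : Polynomial K :=
  (s.choose t : Polynomial K) * (C (-2 : K) * F) ^ t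

lemma cpart_zero (F : Polynomial K) (s : ℕ) : cpart F s 0 = 1 := by simp [cpart]

lemma cpart_deriv {f F : Polynomial K} (hF : derivative F = f) {s t : ℕ}
    (ht : 1 ≤ t) (hts : t ≤ s) :
    derivative (cpart F s t) =
      -(((2 * (s - t) + 2 : ℕ) : Polynomial K) * (f * cpart F s (t - 1))) := by
  have h1 : s.choose (t - 1 + 1) * (t - 1 + 1) = s.choose (t - 1) * (s - (t - 1)) :=
    Nat.choose_succ_right_eq s (t - 1)
  have h2 : t - 1 + 1 = t := by omega
  have h3 : s - (t - 1) = (s - t) + 1 := by omega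
  rw [h2, h3] at h1
  have hc : s.choose t * t * 2 = (2 * (s - t) + 2) * s.choose (t - 1) := by
    calc s.choose t * t * 2 = (s.choose (t - 1) * (s - t + 1)) * 2 := by rw [h1]
      _ = (2 * (s - t) + 2) * s.choose (t - 1) := by ring
  have key : ((s.choose t * t * 2 : ℕ) : Polynomial K)
      = (((2 * (s - t) + 2) * s.choose (t - 1) : ℕ) : Polynomial K) := by
    exact_mod_cast congrArg (fun x : ℕ => (x : Polynomial K)) hc
  unfold cpart
  rw [derivative_mul, derivative_natCast, zero_mul, zero_add, derivative_pow,
    derivative_mul, derivative_C, zero_mul, zero_add, hF]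
  have hC : (C (-2 : K) : Polynomial K) = -2 := by
    rw [map_neg, map_ofNat]
  simp only [hC, C_eq_natCast]
  push_cast at key ⊢
  linear_combination (-(f * (-2 * F) ^ (t - 1))) * key

noncomputable def wsol (f F : Polynomial K) (k : ℕ) : ℕ → Polynomial K := fun i =>
  if k < i then 0
  else if Odd i then cpart F (k / 2) ((k - i) / 2)
  else f * cpart F (k / 2) ((k - i) / 2)

lemma wsol_of_gt {f F : Polynomial K} {k i : ℕ} (h : k < i) : wsol f F k i = 0 := by
  simp [wsol, h]

lemma wsol_odd {f F : Polynomial K} {k i : ℕ} (h : i ≤ k) (hi : Odd i) :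
    wsol f F k i = cpart F (k / 2) ((k - i) / 2) := by
  simp [wsol, Nat.not_lt.mpr h, hi]

lemma wsol_even {f F : Polynomial K} {k i : ℕ} (h : i ≤ k) (hi : ¬ Odd i) :
    wsol f F k i = f * cpart F (k / 2) ((k - i) / 2) := by
  simp [wsol, Nat.not_lt.mpr h, hi]

lemma wsol_mem (f F : Polynomial K) (hF : derivative F = f) {m k : ℕ}
    (hk : Odd k) (hkm : k ≤ m) (hm : Odd m) :
    (∀ i, m < i → wsol f F k i = 0) ∧
    derivative (wsol f F k m) = 0 ∧
    derivative (wsol f F k (m - 1)) = derivative f * wsol f F k m ∧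
    (∀ j, Odd j → j + 2 ≤ m →
      derivative (wsol f F k j) + (j + 2) • (f * wsol f F k (j + 2)) = wsol f F k (j + 1)) ∧
    (∀ j, Even j → j + 2 ≤ m - 1 →
      derivative (wsol f F k j) + (j + 2) • (f * wsol f F k (j + 2)) =
        derivative f * wsol f F k (j + 1)) ∧
    f * wsol f F k 1 = wsol f F k 0 := by
  obtain ⟨sk, hsk⟩ := hk
  obtain ⟨sm, hsm⟩ := hm
  have hs : k / 2 = sk := by omega
  refine ⟨fun i hi => wsol_of_gt (by omega), ?_, ?_, ?_, ?_, ?_⟩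
  · by_cases hkm' : k = m
    · rw [← hkm', wsol_odd le_rfl ⟨sk, hsk⟩]
      have e0 : (k - k) / 2 = 0 := by omega
      rw [e0, cpart_zero]
      exact derivative_one
    · rw [wsol_of_gt (show k < m by omega)]
      exact derivative_zero
  · by_cases hkm' : k = m
    · subst hkm'
      rw [wsol_even (show k - 1 ≤ k by omega) (by rintro ⟨w, hw⟩; omega),
        wsol_odd le_rfl ⟨sk, hsk⟩]
      have e1 : (k - (k - 1)) / 2 = 0 := by omega
      have e2 : (k - k) / 2 = 0 := by omega
      rw [e1, e2, cpart_zero]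
      simp
    · rw [wsol_of_gt (show k < m - 1 by omega), wsol_of_gt (show k < m by omega)]
      simp
  · intro j hj hjm
    obtain ⟨r, hr⟩ := hj
    by_cases h1 : k < j
    · rw [wsol_of_gt h1, wsol_of_gt (show k < j + 2 by omega),
        wsol_of_gt (show k < j + 1 by omega)]
      simp
    · by_cases h2 : j = k
      · rw [h2, wsol_odd le_rfl ⟨sk, hsk⟩]
        have e0 : (k - k) / 2 = 0 := by omega
        rw [e0, cpart_zero, wsol_of_gt (show k < k + 2 by omega),
          wsol_of_gt (show k < k + 1 by omega)]
        simp
      · obtain ⟨t, ht1, hts, hkt⟩ :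
            ∃ t, 1 ≤ t ∧ t ≤ sk ∧ k = j + 2 * t := ⟨(k - j) / 2, by omega, by omega, by omega⟩
        rw [wsol_odd (show j ≤ k by omega) ⟨r, hr⟩,
          wsol_odd (show j + 2 ≤ k by omega) ⟨r + 1, by omega⟩,
          wsol_even (show j + 1 ≤ k by omega) (by rintro ⟨w, hw⟩; omega)]
        have e1 : (k - j) / 2 = t := by omega
        have e2 : (k - (j + 2)) / 2 = t - 1 := by omega
        have e3 : (k - (j + 1)) / 2 = t - 1 := by omega
        rw [e1, e2, e3, hs, cpart_deriv hF ht1 hts, nsmul_eq_mul]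
        have hj2 : j + 2 = 2 * (sk - t) + 3 := by omega
        rw [hj2]
        push_cast
        ring
  · intro j hj hjm
    obtain ⟨r, hr⟩ := hj
    by_cases h1 : k < j
    · rw [wsol_of_gt h1, wsol_of_gt (show k < j + 2 by omega),
        wsol_of_gt (show k < j + 1 by omega)]
      simp
    · by_cases h2 : j + 1 = k
      · rw [wsol_even (show j ≤ k by omega) (by rintro ⟨w, hw⟩; omega),
          wsol_odd (show j + 1 ≤ k by omega) ⟨sk, by omega⟩,
          wsol_of_gt (show k < j + 2 by omega)]
        have e1 : (k - j) / 2 = 0 := by omega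
        have e2 : (k - (j + 1)) / 2 = 0 := by omega
        rw [e1, e2, cpart_zero]
        simp
      · obtain ⟨t, ht1, hts, hkt⟩ :
            ∃ t, 1 ≤ t ∧ t ≤ sk ∧ k = j + 2 * t + 1 :=
          ⟨(k - j) / 2, by omega, by omega, by omega⟩
        rw [wsol_even (show j ≤ k by omega) (by rintro ⟨w, hw⟩; omega),
          wsol_odd (show j + 1 ≤ k by omega) ⟨r, by omega⟩,
          wsol_even (show j + 2 ≤ k by omega) (by rintro ⟨w, hw⟩; omega)]
        have e1 : (k - j) / 2 = t := by omega
        have e2 : (k - (j + 1)) / 2 = t := by omega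
        have e3 : (k - (j + 2)) / 2 = t - 1 := by omega
        rw [e1, e2, e3, hs, derivative_mul, cpart_deriv hF ht1 hts, nsmul_eq_mul]
        have hj2 : j + 2 = 2 * (sk - t) + 2 := by omega
        rw [hj2]
        push_cast
        ring
  · rw [wsol_odd (show 1 ≤ k by omega) odd_one,
      wsol_even (Nat.zero_le k) (by rintro ⟨w, hw⟩; omega)]
    have e1 : (k - 1) / 2 = sk := by omega
    have e2 : (k - 0) / 2 = sk := by omega
    rw [e1, e2, hs]

lemma wsol_coeff0 {f F : Polynomial K} (hF0 : F.coeff 0 = 0) {k i : ℕ}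
    (hk : Odd k) (hi : Odd i) :
    (wsol f F k i).coeff 0 = if i = k then 1 else 0 := by
  obtain ⟨r, hr⟩ := hi
  obtain ⟨sk, hsk⟩ := hk
  have hF0' : F.eval 0 = 0 := by rw [← coeff_zero_eq_eval_zero]; exact hF0
  by_cases h1 : k < i
  · rw [wsol_of_gt h1, if_neg (by omega)]
    simp
  · by_cases h2 : i = k
    · rw [if_pos h2, h2, wsol_odd le_rfl ⟨sk, hsk⟩]
      have e0 : (k - k) / 2 = 0 := by omega
      rw [e0, cpart_zero]
      simp
    · rw [if_neg h2, wsol_odd (show i ≤ k by omega) ⟨r, hr⟩]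
      have ht : (k - i) / 2 ≠ 0 := by omega
      simp [cpart, coeff_zero_eq_eval_zero, hF0', zero_pow ht]

lemma sol_even_rel {f : Polynomial K} (hf : f ≠ 0) {m : ℕ} {v : ℕ → Polynomial K}
    (h3 : ∀ j, Odd j → j + 2 ≤ m →
      derivative (v j) + (j + 2) • (f * v (j + 2)) = v (j + 1))
    (h4 : ∀ j, Even j → j + 2 ≤ m - 1 →
      derivative (v j) + (j + 2) • (f * v (j + 2)) = derivative f * v (j + 1))
    (h5 : f * v 1 = v 0) :
    ∀ t, 2 * t + 1 ≤ m → v (2 * t) = f * v (2 * t + 1) := by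
  intro t
  induction t with
  | zero => intro _; exact h5.symm
  | succ t ih =>
    intro hle
    have ih' := ih (by omega)
    have e4 := h4 (2 * t) ⟨t, by ring⟩ (by omega)
    have e3 := h3 (2 * t + 1) ⟨t, by ring⟩ (by omega)
    rw [ih', derivative_mul] at e4
    simp only [nsmul_eq_mul] at e3 e4
    have i1 : 2 * t + 1 + 2 = 2 * t + 3 := by omega
    have i2 : 2 * t + 1 + 1 = 2 * t + 2 := by omega
    rw [i1, i2] at e3
    have key : ((2 * t + 3 : ℕ) : Polynomial K) *
        (f * (v (2 * t + 2) - f * v (2 * t + 3))) = 0 := by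
      push_cast at e3 e4 ⊢
      linear_combination e4 - f * e3
    have h23 : ((2 * t + 3 : ℕ) : Polynomial K) ≠ 0 := Nat.cast_ne_zero.mpr (by omega)
    have hsub : v (2 * t + 2) - f * v (2 * t + 3) = 0 := by
      rcases mul_eq_zero.mp key with h | h
      · exact absurd h h23
      · rcases mul_eq_zero.mp h with h' | h'
        · exact absurd h' hf
        · exact h'
    have : v (2 * t + 2) = f * v (2 * t + 3) := by
      have := sub_eq_zero.mp hsub
      exact this
    have e2 : 2 * (t + 1) + 1 = 2 * t + 3 := by ring
    have e1 : 2 * (t + 1) = 2 * t + 2 := by ring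
    rw [e2, e1]
    exact this

lemma sol_vanish {f : Polynomial K} (hf : f ≠ 0) {m : ℕ} (hm : Odd m)
    {v : ℕ → Polynomial K}
    (h0 : ∀ i, m < i → v i = 0)
    (h1 : derivative (v m) = 0)
    (h3 : ∀ j, Odd j → j + 2 ≤ m →
      derivative (v j) + (j + 2) • (f * v (j + 2)) = v (j + 1))
    (h4 : ∀ j, Even j → j + 2 ≤ m - 1 →
      derivative (v j) + (j + 2) • (f * v (j + 2)) = derivative f * v (j + 1))
    (h5 : f * v 1 = v 0)
    (hc : ∀ j, Odd j → j ≤ m → (v j).coeff 0 = 0) :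
    v = 0 := by
  obtain ⟨sm, hsm⟩ := hm
  have heven := sol_even_rel hf h3 h4 h5
  -- derivative relation for odd entries
  have hderiv : ∀ t, 2 * t + 3 ≤ m →
      derivative (v (2 * t + 1)) = -(((2 * t + 2 : ℕ) : Polynomial K) * (f * v (2 * t + 3))) := by
    intro t hle
    have e3 := h3 (2 * t + 1) ⟨t, by ring⟩ (by omega)
    have i1 : 2 * t + 1 + 2 = 2 * t + 3 := by omega
    have i2 : 2 * t + 1 + 1 = 2 * t + 2 := by omega
    rw [i1, i2] at e3
    have hB := heven (t + 1) (by omega)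
    rw [show 2 * (t + 1) = 2 * t + 2 from by omega] at hB
    rw [show 2 * t + 2 + 1 = 2 * t + 3 from by omega] at hB
    rw [hB] at e3
    simp only [nsmul_eq_mul] at e3
    push_cast at e3 ⊢
    linear_combination e3
  -- downward induction: odd entries vanish
  have hodd : ∀ t, 2 * t ≤ m → v (m - 2 * t) = 0 := by
    intro t
    induction t with
    | zero =>
      intro _
      have : m - 2 * 0 = m := by omega
      rw [this]
      exact poly_eq_zero h1 (hc m ⟨sm, hsm⟩ le_rfl)
    | succ t ih =>
      intro hle
      have ihv := ih (by omega)
      obtain ⟨a, ha⟩ : ∃ a, m - 2 * (t + 1) = 2 * a + 1 := ⟨sm - t - 1, by omega⟩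
      have hidx : 2 * a + 3 = m - 2 * t := by omega
      have hd := hderiv a (by omega)
      rw [hidx, ihv] at hd
      simp only [mul_zero, neg_zero] at hd
      have hcz := hc (m - 2 * (t + 1)) ⟨a, ha⟩ (by omega)
      rw [ha] at hcz ⊢
      exact poly_eq_zero hd hcz
  have hoddall : ∀ j, Odd j → j ≤ m → v j = 0 := by
    intro j ⟨r, hr⟩ hj
    have := hodd ((m - j) / 2) (by omega)
    have e : m - 2 * ((m - j) / 2) = j := by omega
    rwa [e] at this
  funext i
  show v i = 0
  rcases Nat.lt_or_ge m i with h | h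
  · exact h0 i h
  · rcases Nat.even_or_odd i with ⟨r, hr⟩ | hoddi
    · have hi1 : i + 1 ≤ m := by omega
      have := heven (i / 2) (by omega)
      have e1 : 2 * (i / 2) = i := by omega
      rw [e1] at this
      rw [this, hoddall (i + 1) ⟨i / 2, by omega⟩ (by omega), mul_zero]
    · exact hoddall i hoddi h

end Stmt6Aux

open Stmt6Aux in
/-- For odd `m ≥ 3` and `deg f ≥ 2`, the solution set of the system `(Io)_m`
in the unknowns `(d₀, c₁, d₂, c₃, …, d_{m-1}, c_m)` (encoded as `v : ℕ → K[x]` with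
`v i = d_i` for even `i`, `v i = c_i` for odd `i`, and `v i = 0` for `i > m`)
is a `K`-vector space of dimension `(m+1)/2`. -/
theorem stmt6 (K : Type*) [Field K] [CharZero K] (f : Polynomial K)
    (hf : 2 ≤ f.natDegree) (m : ℕ) (hm : 3 ≤ m) (hodd : Odd m) :
    ∃ S : Submodule K (ℕ → Polynomial K),
      (S : Set (ℕ → Polynomial K)) =
        {v : ℕ → Polynomial K |
          (∀ i, m < i → v i = 0) ∧
          derivative (v m) = 0 ∧
          derivative (v (m - 1)) = derivative f * v m ∧
          (∀ j, Odd j → j + 2 ≤ m →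
            derivative (v j) + (j + 2) • (f * v (j + 2)) = v (j + 1)) ∧
          (∀ j, Even j → j + 2 ≤ m - 1 →
            derivative (v j) + (j + 2) • (f * v (j + 2)) = derivative f * v (j + 1)) ∧
          f * v 1 = v 0} ∧
      Module.finrank K S = (m + 1) / 2 := by
  classical
  obtain ⟨F, hF, hF0⟩ := exists_antideriv f
  have hf0 : f ≠ 0 := by
    intro h
    rw [h] at hf
    simp at hf
  let S : Submodule K (ℕ → Polynomial K) :=
    { carrier := {v : ℕ → Polynomial K |
          (∀ i, m < i → v i = 0) ∧
          derivative (v m) = 0 ∧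
          derivative (v (m - 1)) = derivative f * v m ∧
          (∀ j, Odd j → j + 2 ≤ m →
            derivative (v j) + (j + 2) • (f * v (j + 2)) = v (j + 1)) ∧
          (∀ j, Even j → j + 2 ≤ m - 1 →
            derivative (v j) + (j + 2) • (f * v (j + 2)) = derivative f * v (j + 1)) ∧
          f * v 1 = v 0}
      add_mem' := by
        rintro a b ⟨a0, a1, a2, a3, a4, a5⟩ ⟨b0, b1, b2, b3, b4, b5⟩
        refine ⟨fun i hi => by simp [a0 i hi, b0 i hi], ?_, ?_, ?_, ?_, ?_⟩
        · simp only [Pi.add_apply, derivative_add, a1, b1, add_zero]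
        · simp only [Pi.add_apply, derivative_add, a2, b2, mul_add]
        · intro j hj hjm
          have ha := a3 j hj hjm
          have hb := b3 j hj hjm
          simp only [nsmul_eq_mul] at ha hb ⊢
          simp only [Pi.add_apply, derivative_add]
          linear_combination ha + hb
        · intro j hj hjm
          have ha := a4 j hj hjm
          have hb := b4 j hj hjm
          simp only [nsmul_eq_mul] at ha hb ⊢
          simp only [Pi.add_apply, derivative_add]
          linear_combination ha + hb
        · simp only [Pi.add_apply, mul_add, a5, b5]
      zero_mem' := by
        refine ⟨fun i _ => rfl, ?_, ?_, ?_, ?_, ?_⟩ <;> simp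
      smul_mem' := by
        rintro c a ⟨a0, a1, a2, a3, a4, a5⟩
        refine ⟨fun i hi => by simp [a0 i hi], ?_, ?_, ?_, ?_, ?_⟩
        · simp only [Pi.smul_apply, smul_eq_C_mul, derivative_mul, derivative_C,
            zero_mul, zero_add, a1, mul_zero]
        · simp only [Pi.smul_apply, smul_eq_C_mul, derivative_mul, derivative_C,
            zero_mul, zero_add, a2]
          ring
        · intro j hj hjm
          have ha := a3 j hj hjm
          simp only [nsmul_eq_mul] at ha ⊢
          simp only [Pi.smul_apply, smul_eq_C_mul, derivative_mul, derivative_C,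
            zero_mul, zero_add]
          linear_combination C c * ha
        · intro j hj hjm
          have ha := a4 j hj hjm
          simp only [nsmul_eq_mul] at ha ⊢
          simp only [Pi.smul_apply, smul_eq_C_mul, derivative_mul, derivative_C,
            zero_mul, zero_add]
          linear_combination C c * ha
        · simp only [Pi.smul_apply, smul_eq_C_mul]
          linear_combination C c * a5 }
  refine ⟨S, rfl, ?_⟩
  let ψ : S →ₗ[K] (Fin ((m + 1) / 2) → K) :=
    { toFun := fun v t => ((v : ℕ → Polynomial K) (m - 2 * (t : ℕ))).coeff 0
      map_add' := by
        intro v w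
        funext t
        simp
      map_smul' := by
        intro c v
        funext t
        simp }
  have hinj : Function.Injective ψ := by
    rw [← LinearMap.ker_eq_bot, LinearMap.ker_eq_bot']
    intro v hv
    obtain ⟨h0, h1, h2, h3, h4, h5⟩ := v.2
    have hc : ∀ j, Odd j → j ≤ m → ((v : ℕ → Polynomial K) j).coeff 0 = 0 := by
      intro j hj hjm
      obtain ⟨r, hr⟩ := hj
      obtain ⟨sm, hsm⟩ := hodd
      have ht : ((m - j) / 2) < (m + 1) / 2 := by omega
      have hvt : ((v : ℕ → Polynomial K) (m - 2 * ((m - j) / 2))).coeff 0 = 0 :=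
        congrFun hv ⟨(m - j) / 2, ht⟩
      have he : m - 2 * ((m - j) / 2) = j := by omega
      rwa [he] at hvt
    exact Subtype.ext (sol_vanish hf0 hodd h0 h1 h3 h4 h5 hc)
  have hsurj : Function.Surjective ψ := by
    intro c
    have h2t : ∀ t : Fin ((m + 1) / 2), 2 * (t : ℕ) ≤ m := by
      intro t
      have := t.2
      omega
    have hoddt : ∀ t : Fin ((m + 1) / 2), Odd (m - 2 * (t : ℕ)) := by
      intro t
      obtain ⟨sm, hsm⟩ := hodd
      exact ⟨sm - (t : ℕ), by have := h2t t; omega⟩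
    have hWmem : ∀ t : Fin ((m + 1) / 2), wsol f F (m - 2 * (t : ℕ)) ∈ S := by
      intro t
      exact wsol_mem f F hF (hoddt t) (by omega) hodd
    let W : Fin ((m + 1) / 2) → S := fun t => ⟨_, hWmem t⟩
    refine ⟨∑ t, c t • W t, ?_⟩
    have hψW : ∀ t, ψ (W t) = Pi.single t (1 : K) := by
      intro t
      funext s
      have hval : ψ (W t) s = ((wsol f F (m - 2 * (t : ℕ))) (m - 2 * (s : ℕ))).coeff 0 := rfl
      rw [hval, wsol_coeff0 hF0 (hoddt t) (hoddt s), Pi.single_apply]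
      by_cases hst : s = t
      · rw [if_pos (by rw [hst]), if_pos hst]
      · have hne : ¬(m - 2 * (s : ℕ) = m - 2 * (t : ℕ)) := by
          intro h
          exact hst (Fin.ext (by have := h2t s; have := h2t t; omega))
        rw [if_neg hne, if_neg hst]
    rw [map_sum]
    simp only [map_smul, hψW]
    have hsingle : ∀ t : Fin ((m + 1) / 2),
        c t • (Pi.single t (1 : K) : Fin ((m + 1) / 2) → K) = Pi.single t (c t) := by
      intro t
      funext s
      by_cases h : s = t <;> simp [Pi.single_apply, h]
    simp_rw [hsingle]
    exact Finset.univ_sum_single c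
  have e := LinearEquiv.ofBijective ψ ⟨hinj, hsurj⟩
  rw [e.finrank_eq, Module.finrank_fin_fun]
end

section
/- Let K be a field of characteristic zero and f ∈ K[x] with deg f ≥ 2. Suppose polynomials c₁, c₃, d₀, d₂ ∈ K[x] satisfy the base-case system: c₃' = 0 (with m=3: c_m' = 0), d₂' = f'c₃, c₁' + 3fc₃ = d₂, d₀' + 2fd₂ = f'c₁, fc₁ = d₀. Then the solution set is a 2-dimensional K-vector space, spanned by (f·(-∫2f dx), -∫2f dx, f, 1) and (f, 1, 0, 0) in coordinates (d₀, c₁, d₂, c₃). -/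
open Polynomial

/-- The base-case system (`m = 3`): `c₃' = 0`, `d₂' = f'c₃`,
`c₁' + 3fc₃ = d₂`, `d₀' + 2fd₂ = f'c₁`, `fc₁ = d₀` has solution set (in coordinates
`(d₀, c₁, d₂, c₃)`) equal to the 2-dimensional `K`-span of
`(f·(-∫2f dx), -∫2f dx, f, 1)` and `(f, 1, 0, 0)`, and these two vectors are
linearly independent. Here `F = ∫2f dx`. -/
theorem stmt7 (K : Type*) [Field K] [CharZero K] (f F : Polynomial K)
    (hf : 2 ≤ f.natDegree)
    (hF : derivative F = 2 • f) (hF0 : F.coeff 0 = 0) :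
    (∀ v : Fin 4 → Polynomial K,
      (derivative (v 3) = 0 ∧
       derivative (v 2) = derivative f * v 3 ∧
       derivative (v 1) + 3 • (f * v 3) = v 2 ∧
       derivative (v 0) + 2 • (f * v 2) = derivative f * v 1 ∧
       f * v 1 = v 0) ↔
      (∃ a b : K, v = a • ![f * (-F), -F, f, 1] + b • ![f, 1, 0, 0])) ∧
    LinearIndependent K ![![f * (-F), -F, f, 1], ![f, 1, 0, 0]] := by
  have hf0 : f ≠ 0 := by
    intro h
    rw [h] at hf
    simp at hf
  constructor
  · intro v
    constructor
    · rintro ⟨h3, h2, h1, h0, h4⟩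
      -- v 3 is a constant
      obtain hv3 : v 3 = C ((v 3).coeff 0) := eq_C_of_derivative_eq_zero h3
      set a := (v 3).coeff 0 with ha
      -- f * (v1' + 2 v2) = 0
      have key : f * (derivative (v 1) + 2 • v 2) = 0 := by
        have := h0
        rw [← h4, derivative_mul] at this
        have := sub_eq_zero.mpr this
        rw [← this]
        ring
      have key2 : derivative (v 1) = -(2 • v 2) :=
        by
        have := mul_eq_zero.mp key
        rcases this with h | h
        · exact absurd h hf0
        · linear_combination h
      -- v 2 = a • f
      have hv2 : v 2 = a • f := by
        have h3v : (3 : Polynomial K) * v 2 = 3 * (a • f) := by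
          have := h1
          rw [key2, hv3] at this
          rw [smul_eq_C_mul]
          linear_combination -this
        have := mul_left_cancel₀ (by norm_num : (3 : Polynomial K) ≠ 0) h3v
        exact this
      -- v 1 = -(a • F) + C b
      have hd1 : derivative (v 1 + a • F) = 0 := by
        rw [derivative_add, key2, hv2, derivative_smul, hF]
        simp [smul_smul, mul_comm]
      obtain hv1' : v 1 + a • F = C ((v 1 + a • F).coeff 0) := eq_C_of_derivative_eq_zero hd1
      set b := (v 1 + a • F).coeff 0 with hb
      have hv1 : v 1 = C b - a • F := by linear_combination hv1'
      refine ⟨a, b, ?_⟩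
      funext i
      fin_cases i <;>
        simp [hv3, hv2, hv1, ← h4, smul_eq_C_mul] <;> ring
    · rintro ⟨a, b, rfl⟩
      refine ⟨?_, ?_, ?_, ?_, ?_⟩ <;>
        simp [smul_eq_C_mul, derivative_mul, hF] <;> ring
  · rw [linearIndependent_fin2]
    constructor
    · intro h
      have := congrFun h 1
      simp at this
    · intro a h
      have := congrFun h 3
      simp [smul_eq_C_mul] at this
end

section
/- Let K be a field of characteristic zero and f ∈ K[x] with deg f ≥ 2. For every even integer m ≥ 2, any solution (c₁, d₀, ..., c_{m-1}, d_m) in K[x] of the system (Ie)_m — d_m' = 0; c_{m-1}' = d_m; d_{m-2}' + m f d_m = f' c_{m-1}; c_{m-3}' + (m-1) f c_{m-1} = d_{m-2}; ...; d_0' + 2 f d_2 = f' c_1; f c_1 = d_0 — satisfies d_m = 0. -/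
/-!
Let `D = ∂ₓ + 2f ∂ᵤ` be the derivation of `K[x][u]` with `u′ = 2f`, and put
`G = ∑ c_{2i+1} uⁱ`, `Q = ∑ d_{2i} uⁱ`. The odd equations say `Q = u·DG + f·G` and the even
ones `DQ = f′·G`, so `H = DG` satisfies `u·DH + 3f·H = 0`. If `F′ = 2f` then `D` kills `u - F`;
writing a nonzero `H` as `(u - F)ᵏ H₁` with `(u - F) ∤ H₁`, the polynomial `h = H₁(F)` satisfies
`F h′ + 3f h = 0`, so `F³h²` is constant and `h = 0`, which is absurd. Hence `DG = 0`, and its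
top coefficient is `c_{m-1}′ = d_m`.
-/

open Polynomial Differential

-- With this instance, `implicitDeriv (C (2 * f))` on `K[X][X]` is the derivation `D` above.
noncomputable instance {R : Type*} [CommRing R] : Differential R[X] :=
  ⟨(derivative' : Derivation R R[X] R[X]).restrictScalars ℤ⟩

namespace Polynomial

section ImplicitDeriv

variable {R : Type*} [CommRing R]

lemma differential_deriv_eq_derivative (p : R[X]) : Differential.deriv p = derivative p := rfl

lemma coeff_implicitDeriv_C (a : R[X]) (P : R[X][X]) (n : ℕ) :
    (implicitDeriv (C a) P).coeff n =
      derivative (P.coeff n) + a * (P.coeff (n + 1) * (n + 1)) := by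
  simp [implicitDeriv, coeff_C_mul, coeff_derivative, differential_deriv_eq_derivative]

lemma implicitDeriv_X_sub_C {a F : R[X]} (hF : derivative F = a) :
    implicitDeriv (C a) (X - C F) = 0 := by
  rw [map_sub, implicitDeriv_X, implicitDeriv_C, differential_deriv_eq_derivative, hF, sub_self]

lemma eval_implicitDeriv {a F : R[X]} (hF : derivative F = a) (P : R[X][X]) :
    eval F (implicitDeriv (C a) P) = derivative (eval F P) := by
  have hF' : F′ = aeval F (C a) := by simpa [differential_deriv_eq_derivative] using hF
  simpa [differential_deriv_eq_derivative] using (deriv_aeval_eq_implicitDeriv F (C a) hF' P).symm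

end ImplicitDeriv

section Domain

variable {R : Type*} [CommRing R] [IsDomain R] [CharZero R]

theorem eq_zero_of_mul_derivative_add_mul_eq_zero {f F h : R[X]} (hf : f ≠ 0)
    (hF : derivative F = 2 * f) (h_ode : F * derivative h + 3 * f * h = 0) : h = 0 := by
  have hF0 : F.natDegree ≠ 0 := by
    rw [Ne, ← derivative_eq_zero, hF]
    exact mul_ne_zero two_ne_zero hf
  have hconst : derivative (F ^ 3 * h ^ 2) = 0 := by
    rw [derivative_mul, derivative_pow, derivative_pow, hF]
    simp only [Nat.cast_ofNat, map_ofNat]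
    linear_combination (2 * F ^ 2 * h) * h_ode
  by_contra hh
  have := derivative_eq_zero.mp hconst
  rw [natDegree_mul (pow_ne_zero _ (by rintro rfl; simp at hF0)) (pow_ne_zero _ hh),
    natDegree_pow, natDegree_pow] at this
  omega

theorem eq_zero_of_X_mul_implicitDeriv_add_eq_zero {f F : R[X]} (hf : f ≠ 0)
    (hF : derivative F = 2 * f) {H : R[X][X]}
    (hH : X * implicitDeriv (C (2 * f)) H + C (3 * f) * H = 0) : H = 0 := by
  set D := implicitDeriv (C (2 * f))
  by_contra hH0
  obtain ⟨H₁, hfac, hndvd⟩ := exists_eq_pow_rootMultiplicity_mul_and_not_dvd H hH0 F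
  set q := (X - C F) ^ rootMultiplicity F H
  have hq : D q = 0 := by
    rw [Derivation.leibniz_pow, implicitDeriv_X_sub_C hF, smul_zero, smul_zero]
  have hH₁ : X * D H₁ + C (3 * f) * H₁ = 0 := by
    have : q * (X * D H₁ + C (3 * f) * H₁) = 0 := by
      rw [hfac, Derivation.leibniz, hq, smul_zero, add_zero, smul_eq_mul] at hH
      linear_combination hH
    exact (mul_eq_zero.mp this).resolve_left (pow_ne_zero _ (X_sub_C_ne_zero F))
  refine hndvd (dvd_iff_isRoot.mpr (eq_zero_of_mul_derivative_add_mul_eq_zero hf hF ?_))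
  have := congrArg (eval F) hH₁
  rwa [eval_add, eval_mul, eval_mul, eval_X, eval_C, eval_implicitDeriv hF, eval_zero] at this

end Domain

theorem exists_derivative_eq {K : Type*} [Field K] [CharZero K] (p : K[X]) :
    ∃ F, derivative F = p := by
  induction p using Polynomial.induction_on' with
  | add p q hp hq =>
    obtain ⟨F, rfl⟩ := hp
    obtain ⟨G, rfl⟩ := hq
    exact ⟨F + G, derivative_add⟩
  | monomial n a =>
    refine ⟨C (a / (n + 1)) * X ^ (n + 1), ?_⟩
    rw [derivative_C_mul_X_pow, ← C_mul_X_pow_eq_monomial]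
    congr 1
    push_cast
    field_simp

section System

variable {R : Type*} [CommRing R]

noncomputable def truncPoly (a : ℕ → R) (n : ℕ) : R[X] :=
  ∑ i ∈ Finset.range n, monomial i (a i)

lemma coeff_truncPoly (a : ℕ → R) (n k : ℕ) :
    (truncPoly a n).coeff k = if k < n then a k else 0 := by
  simp [truncPoly, coeff_monomial]

variable {f : R[X]} {c d : ℕ → R[X]} {M : ℕ}

theorem X_mul_implicitDeriv_add_C_mul_truncPoly (hM : 1 ≤ M)
    (htop2 : derivative (c (2 * M - 1)) = d (2 * M))
    (hodd : ∀ j, Odd j → j + 2 ≤ 2 * M - 1 →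
      derivative (c j) + (j + 2) • (f * c (j + 2)) = d (j + 1))
    (hlow : f * c 1 = d 0) :
    X * implicitDeriv (C (2 * f)) (truncPoly (fun i ↦ c (2 * i + 1)) M) +
        C f * truncPoly (fun i ↦ c (2 * i + 1)) M =
      truncPoly (fun i ↦ d (2 * i)) (M + 1) := by
  refine Polynomial.ext fun n ↦ ?_
  rcases n with _ | k
  · simp [coeff_truncPoly, show 0 < M by omega, hlow]
  · simp only [coeff_add, coeff_X_mul, coeff_implicitDeriv_C, coeff_C_mul, coeff_truncPoly]
    rcases lt_trichotomy (k + 1) M with hk | rfl | hk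
    · have h := hodd (2 * k + 1) (odd_two_mul_add_one k) (by omega)
      rw [show 2 * k + 1 + 2 = 2 * (k + 1) + 1 by ring, show 2 * k + 1 + 1 = 2 * (k + 1) by ring,
        nsmul_eq_mul] at h
      rw [if_pos (by omega), if_pos hk, if_pos (by omega)]
      push_cast at h ⊢
      linear_combination h
    · rw [show 2 * (k + 1) - 1 = 2 * k + 1 by omega] at htop2
      simp [htop2]
    · simp [show ¬ k < M by omega, show ¬ k + 1 < M by omega, show ¬ k + 1 < M + 1 by omega]

theorem implicitDeriv_truncPoly
    (htop : derivative (d (2 * M)) = 0)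
    (heven : ∀ j, Even j → j + 2 ≤ 2 * M →
      derivative (d j) + (j + 2) • (f * d (j + 2)) = derivative f * c (j + 1)) :
    implicitDeriv (C (2 * f)) (truncPoly (fun i ↦ d (2 * i)) (M + 1)) =
      C (derivative f) * truncPoly (fun i ↦ c (2 * i + 1)) M := by
  refine Polynomial.ext fun k ↦ ?_
  simp only [coeff_implicitDeriv_C, coeff_C_mul, coeff_truncPoly]
  rcases lt_trichotomy k M with hk | rfl | hk
  · have h := heven (2 * k) (even_two_mul k) (by omega)
    rw [show 2 * k + 2 = 2 * (k + 1) by ring, nsmul_eq_mul] at h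
    rw [if_pos (by omega), if_pos (by omega), if_pos hk]
    push_cast at h ⊢
    linear_combination h
  · simp [htop]
  · simp [show ¬ k < M + 1 by omega, show ¬ k < M by omega, show ¬ k + 1 < M + 1 by omega]

lemma coeff_implicitDeriv_truncPoly_succ (a : R[X]) (b : ℕ → R[X]) (n : ℕ) :
    (implicitDeriv (C a) (truncPoly b (n + 1))).coeff n = derivative (b n) := by
  simp [coeff_implicitDeriv_C, coeff_truncPoly]

theorem X_mul_implicitDeriv_add_eq_zero {G Q : R[X][X]}
    (hQ : X * implicitDeriv (C (2 * f)) G + C f * G = Q)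
    (hDQ : implicitDeriv (C (2 * f)) Q = C (derivative f) * G) :
    X * implicitDeriv (C (2 * f)) (implicitDeriv (C (2 * f)) G) +
      C (3 * f) * implicitDeriv (C (2 * f)) G = 0 := by
  have h := congrArg (implicitDeriv (C (2 * f))) hQ
  rw [hDQ, map_add, Derivation.leibniz, Derivation.leibniz, implicitDeriv_X, implicitDeriv_C,
    differential_deriv_eq_derivative] at h
  simp only [smul_eq_mul, map_mul, map_ofNat] at h ⊢
  linear_combination h

end System

end Polynomial

/-- For even `m ≥ 2` and `deg f ≥ 2`, any solution of the system `(Ie)_m`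
(with `c_i` for odd `i`, `d_i` for even `i`) satisfies `d_m = 0`. -/
theorem stmt8 (K : Type*) [Field K] [CharZero K] (f : Polynomial K)
    (hf : 2 ≤ f.natDegree) (m : ℕ) (hm : 2 ≤ m) (hme : Even m)
    (c d : ℕ → Polynomial K)
    (htop : derivative (d m) = 0)
    (htop2 : derivative (c (m - 1)) = d m)
    (heven : ∀ j, Even j → j + 2 ≤ m →
      derivative (d j) + (j + 2) • (f * d (j + 2)) = derivative f * c (j + 1))
    (hodd : ∀ j, Odd j → j + 2 ≤ m - 1 →
      derivative (c j) + (j + 2) • (f * c (j + 2)) = d (j + 1))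
    (hlow : f * c 1 = d 0) :
    d m = 0 := by
  obtain ⟨M, rfl⟩ := hme.two_dvd
  obtain ⟨n, rfl⟩ : ∃ n, M = n + 1 := ⟨M - 1, by omega⟩
  obtain ⟨F, hF⟩ := exists_derivative_eq (2 * f)
  have hf0 : f ≠ 0 := by rintro rfl; simp at hf
  have hDG := eq_zero_of_X_mul_implicitDeriv_add_eq_zero hf0 hF <|
    X_mul_implicitDeriv_add_eq_zero
      (X_mul_implicitDeriv_add_C_mul_truncPoly (by omega) htop2 hodd hlow)
      (implicitDeriv_truncPoly htop heven)
  have htop_coeff := coeff_implicitDeriv_truncPoly_succ (2 * f) (fun i ↦ c (2 * i + 1)) n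
  rw [hDG, coeff_zero, show 2 * n + 1 = 2 * (n + 1) - 1 by omega, htop2] at htop_coeff
  exact htop_coeff.symm
end

section
/- Let K be a field of characteristic zero, f ∈ K[x] with deg f ≥ 2, and m an even integer ≥ 2. Suppose polynomials c_i, d_j ∈ K[x] satisfy, for all k with 0 ≤ k ≤ (m-2)/2, the equations f c₁ = d₀, d₀' + 2fd₂ = f'c₁, and more generally c_{2k+1}' + (2k+3) f c_{2k+3} = d_{2k+2} and d_{2k+2}' + (2k+4) f d_{2k+4} = f' c_{2k+3}. Then for each such k, c_{2k+1}' = -(2k+2)·d_{2k+2}. -/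
open Polynomial

/-- Given the equations `f c₁ = d₀`, `d₀' + 2fd₂ = f'c₁`, and, for all
`k ≤ (m-2)/2`, `c_{2k+1}' + (2k+3) f c_{2k+3} = d_{2k+2}` and
`d_{2k+2}' + (2k+4) f d_{2k+4} = f' c_{2k+3}`, one has
`c_{2k+1}' = -(2k+2)·d_{2k+2}` for all such `k`. -/
theorem stmt9 (K : Type*) [Field K] [CharZero K] (f : Polynomial K)
    (hf : 2 ≤ f.natDegree) (m : ℕ) (hm : 2 ≤ m) (hme : Even m)
    (c d : ℕ → Polynomial K)
    (h0 : f * c 1 = d 0)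
    (h1 : derivative (d 0) + 2 • (f * d 2) = derivative f * c 1)
    (h2 : ∀ k, k ≤ (m - 2) / 2 →
      derivative (c (2 * k + 1)) + (2 * k + 3) • (f * c (2 * k + 3)) = d (2 * k + 2))
    (h3 : ∀ k, k ≤ (m - 2) / 2 →
      derivative (d (2 * k + 2)) + (2 * k + 4) • (f * d (2 * k + 4)) = derivative f * c (2 * k + 3)) :
    ∀ k, k ≤ (m - 2) / 2 →
      derivative (c (2 * k + 1)) = -((2 * k + 2) • d (2 * k + 2)) := by
  have hf0 : f ≠ 0 := by
    intro h
    simp [h] at hf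
  intro k hk
  induction k with
  | zero =>
    have hd0 : derivative f * c 1 + f * derivative (c 1) = derivative (d 0) := by
      rw [← h0, derivative_mul]
    simp only [nsmul_eq_mul] at h1 ⊢
    push_cast at h1 ⊢
    refine mul_left_cancel₀ hf0 ?_
    linear_combination hd0 + h1
  | succ k ih =>
    have hk' : k ≤ (m - 2) / 2 := Nat.le_of_succ_le hk
    have ih' := ih hk'
    have e2 := congrArg derivative (h2 k hk')
    simp only [derivative_add, derivative_smul, derivative_mul] at e2
    have ihd := congrArg derivative ih'
    simp only [derivative_neg, derivative_smul] at ihd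
    have e3 := h3 k hk'
    have e1 : 2 * (k + 1) + 1 = 2 * k + 3 := by ring
    have e4 : 2 * (k + 1) + 2 = 2 * k + 4 := by ring
    rw [e1, e4]
    simp only [nsmul_eq_mul] at e2 ihd e3 ⊢
    push_cast at e2 ihd e3 ⊢
    have hA : ((2 : Polynomial K) * (k : Polynomial K) + 3) * f ≠ 0 := by
      refine mul_ne_zero ?_ hf0
      have h5 : (((2 * k + 3 : ℕ) : Polynomial K)) ≠ 0 := Nat.cast_ne_zero.mpr (by omega)
      push_cast at h5
      exact h5
    refine mul_left_cancel₀ hA ?_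
    linear_combination e2 - ihd + ((2 : Polynomial K) * (k : Polynomial K) + 3) * e3
end

section
/- Let K be a field of characteristic zero and k a positive integer. Set R = K[x^{1/(2k-1)}, x^{-1/(2k-1)}, y] and let α be the K-derivation on R with α(x) = y, α(y) = x^{-(2k+1)/(2k-1)}. Define constants a_{2k+1} ∈ K\{0\} arbitrary, a_{2k} = a_{2k+1}, and for 0 < l ≤ k: a_{2(k-l)+1} = (-(2k+1)/(2k-1)·a_{2(k-l)+2} - (2(k-l)+3)·a_{2(k-l)+3}) / ((1 - (2k+1)/(2k-1))·l), a_{2(k-l)} = (a_{2(k-l)+1} - (2(k-l)+2)·a_{2(k-l)+2}) / ((1 - (2k+1)/(2k-1))·l + 1). Then the K-derivation β with β(x) = Σ_{l=0}^{k} a_{2(k-l)} · x^{1 + (1 - (2k+1)/(2k-1))·l} · y^{2(k-l)} and β(y) = Σ_{l=0}^{k} a_{2(k-l)+1} · x^{(1 - (2k+1)/(2k-1))·l} · y^{2(k-l)+1} commutes with α. -/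
open LaurentPolynomial Polynomial Finset

/-!
Write `z = x ^ (1 / t)` with `t = 2k - 1`, so that `R = K[z, z⁻¹][y]`. Since `t ≠ 0` in `K`, a
derivation `D` of `R` satisfies `D (z ^ n) = (n / t) z ^ (n - t) D (z ^ t)`, hence is determined by
its values on `x = z ^ t` and `y`. The commutator `⁅α, β⁆` is a derivation, so it suffices to check
`α β = β α` on `x` and on `y`.

Reindexing by `j = k - l`, `β x = ∑ a_{2j} z ^ (2j-1) y ^ (2j)` and
`β y = ∑ a_{2j+1} z ^ (2j-2k) y ^ (2j+1)`, and `α` sends `z ^ m y ^ e` to two monomials, one with the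
power of `y` lowered and one with it raised. Comparing the coefficients of `α (β x)` and
`β (α x) = β y` gives `a_{2k} = a_{2k+1}` and the recursion for the even coefficients; comparing
`α (β y)` with `β (α y)` gives the recursion for the odd coefficients and, at the lowest monomial,
`(2k + 1) a₀ + (2k - 1) a₁ = 0`. The latter is the case `j = 0` of the identity
`(2j - 1)(2k + 1) a_{2j} = (2j + 1)(2k - 1) a_{2j+1}`, which propagates downwards from `j = k`
through the two recursions.
-/

namespace CommutingDerivations

/-- `Z K n` is `z ^ n = x ^ (n / t)`. -/
noncomputable def Z (K : Type*) [CommSemiring K] (n : ℤ) : (LaurentPolynomial K)[X] :=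
  Polynomial.C (T n)

section CommRing

variable {K : Type*} [CommRing K]

theorem Z_add (m n : ℤ) : Z K (m + n) = Z K m * Z K n := by
  rw [Z, Z, Z, T_add, map_mul]

theorem Z_zero : Z K 0 = 1 := by
  rw [Z, T_zero, map_one]

theorem C_smul_T_mul_X_pow (c : K) (m : ℤ) (e : ℕ) :
    Polynomial.C (c • T m) * (X : (LaurentPolynomial K)[X]) ^ e = c • (Z K m * X ^ e) := by
  rw [← Polynomial.smul_C, smul_mul_assoc, Z]

theorem map_Z (D : Derivation K (LaurentPolynomial K)[X] (LaurentPolynomial K)[X]) (n : ℤ) :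
    D (Z K n) = n • (Z K (n - 1) * D (Z K 1)) := by
  have step (m : ℤ) : D (Z K (m + 1)) = Z K m * D (Z K 1) + Z K 1 * D (Z K m) := by
    rw [Z_add, D.leibniz, smul_eq_mul, smul_eq_mul, add_comm]
  induction n using Int.induction_on with
  | zero => simp [Z_zero]
  | succ i ih =>
    rw [step, ih, mul_smul_comm, ← mul_assoc, ← Z_add, add_sub_cancel_right, add_sub_cancel,
      add_smul, one_smul, add_comm]
  | pred i ih =>
    have h := step (-i - 1)
    rw [sub_add_cancel, ih] at h
    calc D (Z K (-i - 1)) = Z K (-1) * (Z K 1 * D (Z K (-i - 1))) := by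
          rw [← mul_assoc, ← Z_add, neg_add_cancel, Z_zero, one_mul]
      _ = (-i - 1 : ℤ) • (Z K (-1) * Z K (-i - 1) * D (Z K 1)) := by
          rw [eq_sub_of_add_eq' h.symm]
          simp only [mul_smul_comm, mul_sub, ← mul_assoc, sub_smul, one_smul]
      _ = _ := by rw [← Z_add]; ring_nf

end CommRing

section Field

variable {K : Type*} [Field K] (D : Derivation K (LaurentPolynomial K)[X] (LaurentPolynomial K)[X])
  {t : ℤ}

theorem map_Z_eq_div_smul (ht : (t : K) ≠ 0) (n : ℤ) :
    D (Z K n) = ((n : K) / t) • (Z K (n - t) * D (Z K t)) := by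
  rw [map_Z D n, map_Z D t, mul_smul_comm, ← mul_assoc, ← Z_add, sub_add_sub_cancel,
    ← Int.cast_smul_eq_zsmul K, ← Int.cast_smul_eq_zsmul K, smul_smul, div_mul_cancel₀ _ ht]

theorem eq_zero_of_map_Z_of_map_X (ht : (t : K) ≠ 0) (hZ : D (Z K t) = 0) (hX : D X = 0) :
    D = 0 := by
  have hC (p : LaurentPolynomial K) : D (Polynomial.C p) = 0 := by
    induction p using LaurentPolynomial.induction_on' with
    | add p q hp hq => rw [map_add, map_add, hp, hq, add_zero]
    | C_mul_T n c =>
      have hc : Polynomial.C (LaurentPolynomial.C c) = algebraMap K (LaurentPolynomial K)[X] c := by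
        rw [Polynomial.algebraMap_apply, LaurentPolynomial.C_eq_algebraMap]
      rw [map_mul, hc, ← Z, D.leibniz, map_Z_eq_div_smul D ht, hZ, D.map_algebraMap]
      simp
  refine Derivation.ext fun p => ?_
  rw [Derivation.zero_apply]
  induction p using Polynomial.induction_on with
  | C p => exact hC p
  | add p q hp hq => rw [map_add, hp, hq, add_zero]
  | monomial n c ih => rw [pow_succ, ← mul_assoc, D.leibniz, ih, hX, smul_zero, smul_zero, add_zero]

theorem map_Z_mul_X_pow (ht : (t : K) ≠ 0) {r : ℤ} (hZ : D (Z K t) = X) (hX : D X = Z K r)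
    (m : ℤ) (e : ℕ) :
    D (Z K m * X ^ e) =
      (e : K) • (Z K (m + r) * X ^ (e - 1)) + ((m : K) / t) • (Z K (m - t) * X ^ (e + 1)) := by
  rw [D.leibniz, D.leibniz_pow, map_Z_eq_div_smul D ht, hZ, hX, Nat.cast_smul_eq_nsmul,
    smul_eq_mul, smul_eq_mul, smul_eq_mul, Z_add, pow_succ]
  simp only [Algebra.smul_def]
  ring

theorem commute_of_map_Z_of_map_X (ht : (t : K) ≠ 0)
    (α β : Derivation K (LaurentPolynomial K)[X] (LaurentPolynomial K)[X])
    (hZ : α (β (Z K t)) = β (α (Z K t))) (hX : α (β X) = β (α X))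
    (p : (LaurentPolynomial K)[X]) :
    α (β p) = β (α p) := by
  have h := eq_zero_of_map_Z_of_map_X ⁅α, β⁆ ht (by rw [Derivation.commutator_apply, hZ, sub_self])
    (by rw [Derivation.commutator_apply, hX, sub_self])
  simpa [Derivation.commutator_apply, sub_eq_zero] using congr($h p)

end Field

section SumShift

variable {M : Type*} [AddCommMonoid M] (n : ℕ) (u v w : ℕ → M)

theorem sum_range_add_sum_range_eq_of_shift_down (hv : v 0 = 0)
    (h : ∀ j < n, u j + v (j + 1) = w j) (hn : u n = w n) :
    ∑ j ∈ range (n + 1), u j + ∑ j ∈ range (n + 1), v j = ∑ j ∈ range (n + 1), w j := by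
  rw [sum_range_succ' v, hv, add_zero, sum_range_succ, sum_range_succ w, hn, add_right_comm,
    ← sum_add_distrib, sum_congr rfl fun j hj => h j (mem_range.1 hj)]

theorem sum_range_add_sum_range_eq_of_shift_up (hv : v n = 0) (h0 : u 0 = w 0)
    (h : ∀ j < n, u (j + 1) + v j = w (j + 1)) :
    ∑ j ∈ range (n + 1), u j + ∑ j ∈ range (n + 1), v j = ∑ j ∈ range (n + 1), w j := by
  rw [sum_range_succ v, hv, add_zero, sum_range_succ', sum_range_succ' w, h0, add_right_comm,
    ← sum_add_distrib, sum_congr rfl fun j hj => h j (mem_range.1 hj)]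

end SumShift

theorem smul_add_smul_eq_smul {R N : Type*} [Semiring R] [AddCommMonoid N] [Module R N]
    {c d e : R} {x y z : N} (hx : x = z) (hy : y = z) (h : c + d = e) : c • x + d • y = e • z := by
  rw [hx, hy, ← add_smul, h]

theorem two_mul_sub_one_ne_zero (K : Type*) [Ring K] [CharZero K] (m : ℕ) :
    ((2 * m - 1 : ℤ) : K) ≠ 0 :=
  Int.cast_ne_zero.2 (by omega)

section Reindex

variable {K : Type*} [CommRing K] (k : ℕ) (a : ℕ → K)

theorem sum_C_smul_T_mul_X_pow_even_reflect :
    ∑ l ∈ range (k + 1), Polynomial.C (a (2 * (k - l)) • T (2 * (k : ℤ) - 1 - 2 * (l : ℤ))) *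
      (X : (LaurentPolynomial K)[X]) ^ (2 * (k - l)) =
    ∑ j ∈ range (k + 1), a (2 * j) • (Z K (2 * j - 1) * X ^ (2 * j)) := by
  rw [← sum_range_reflect]
  refine sum_congr rfl fun j hj => ?_
  have hjk : j ≤ k := Nat.lt_succ_iff.1 (mem_range.1 hj)
  rw [C_smul_T_mul_X_pow, add_tsub_cancel_right, Nat.sub_sub_self hjk]
  exact congrArg _ (congrArg₂ (Z K · * X ^ ·) (by omega) rfl)

theorem sum_C_smul_T_mul_X_pow_odd_reflect :
    ∑ l ∈ range (k + 1), Polynomial.C (a (2 * (k - l) + 1) • T (-(2 * (l : ℤ)))) *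
      (X : (LaurentPolynomial K)[X]) ^ (2 * (k - l) + 1) =
    ∑ j ∈ range (k + 1), a (2 * j + 1) • (Z K (2 * j - 2 * k) * X ^ (2 * j + 1)) := by
  rw [← sum_range_reflect]
  refine sum_congr rfl fun j hj => ?_
  have hjk : j ≤ k := Nat.lt_succ_iff.1 (mem_range.1 hj)
  rw [C_smul_T_mul_X_pow, add_tsub_cancel_right, Nat.sub_sub_self hjk]
  exact congrArg _ (congrArg₂ (Z K · * X ^ ·) (by omega) rfl)

end Reindex

section Recursion

variable {K : Type*} [Field K] [CharZero K] {k : ℕ} {a : ℕ → K}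

theorem even_step (h3 : ∀ l, 0 < l → l ≤ k →
      a (2 * (k - l)) =
        (a (2 * (k - l) + 1) - (2 * ((k : K) - (l : K)) + 2) * a (2 * (k - l) + 2))
        * ((1 - (2 * (k : K) + 1) / (2 * (k : K) - 1)) * (l : K) + 1)⁻¹)
    (j : ℕ) (hj : j < k) :
    (2 * j - 1 : K) * a (2 * j) = (2 * k - 1) * (a (2 * j + 1) - (2 * j + 2) * a (2 * j + 2)) := by
  have h := h3 (k - j) (by omega) (by omega)
  rw [Nat.sub_sub_self hj.le, Nat.cast_sub hj.le] at h
  have hk : (2 * k - 1 : K) ≠ 0 := by exact_mod_cast two_mul_sub_one_ne_zero K k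
  have hj : (2 * j - 1 : K) ≠ 0 := by exact_mod_cast two_mul_sub_one_ne_zero K j
  have hden : (1 - (2 * (k : K) + 1) / (2 * k - 1)) * (k - j) + 1 = (2 * j - 1) / (2 * k - 1) := by
    field_simp
    ring
  rw [hden, inv_div] at h
  rw [h]
  field_simp
  ring

theorem odd_step (h2 : ∀ l, 0 < l → l ≤ k →
      a (2 * (k - l) + 1) =
        (-((2 * (k : K) + 1) / (2 * (k : K) - 1)) * a (2 * (k - l) + 2)
          - (2 * ((k : K) - (l : K)) + 3) * a (2 * (k - l) + 3))
        * ((1 - (2 * (k : K) + 1) / (2 * (k : K) - 1)) * (l : K))⁻¹)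
    (j : ℕ) (hj : j < k) :
    (2 * k - 2 * j : K) * a (2 * j + 1) =
      (2 * k + 1) * a (2 * j + 2) + (2 * k - 1) * (2 * j + 3) * a (2 * j + 3) := by
  have h := h2 (k - j) (by omega) (by omega)
  rw [Nat.sub_sub_self hj.le, Nat.cast_sub hj.le] at h
  have hk : (2 * k - 1 : K) ≠ 0 := by exact_mod_cast two_mul_sub_one_ne_zero K k
  have hkj : (j - k : K) ≠ 0 := sub_ne_zero.2 (by exact_mod_cast hj.ne)
  have hden : (1 - (2 * (k : K) + 1) / (2 * k - 1)) * (k - j) = 2 * (j - k) / (2 * k - 1) := by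
    field_simp
    ring
  rw [hden, inv_div] at h
  rw [h]
  field_simp
  ring

end Recursion

theorem even_odd_relation_of_steps {K : Type*} [CommRing K] {k : ℕ} {a : ℕ → K}
    (htop : a (2 * k) = a (2 * k + 1))
    (heven : ∀ j < k, (2 * j - 1 : K) * a (2 * j) =
      (2 * k - 1) * (a (2 * j + 1) - (2 * j + 2) * a (2 * j + 2)))
    (hodd : ∀ j < k, (2 * k - 2 * j : K) * a (2 * j + 1) =
      (2 * k + 1) * a (2 * j + 2) + (2 * k - 1) * (2 * j + 3) * a (2 * j + 3))
    (j : ℕ) (hj : j ≤ k) :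
    (2 * j - 1) * (2 * k + 1) * a (2 * j) = (2 * j + 1) * (2 * k - 1) * a (2 * j + 1) := by
  induction hj using Nat.decreasingInduction with
  | self => rw [htop]; ring
  | of_succ j hj ih =>
    push_cast at ih
    rw [show 2 * (j + 1) = 2 * j + 2 by ring, show 2 * j + 2 + 1 = 2 * j + 3 by ring] at ih
    linear_combination
      (2 * k + 1 : K) * heven j hj + (2 * k - 1 : K) * hodd j hj - (2 * k - 1 : K) * ih

section Commutation

variable {K : Type*} [Field K] [CharZero K] (k : ℕ) (a : ℕ → K)
  (α β : Derivation K (LaurentPolynomial K)[X] (LaurentPolynomial K)[X])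

theorem map_map_Z_comm (hαZ : α (Z K (2 * k - 1)) = X) (hαX : α X = Z K (-(2 * k + 1)))
    (hβZ : β (Z K (2 * k - 1)) = ∑ j ∈ range (k + 1), a (2 * j) • (Z K (2 * j - 1) * X ^ (2 * j)))
    (hβX : β X = ∑ j ∈ range (k + 1), a (2 * j + 1) • (Z K (2 * j - 2 * k) * X ^ (2 * j + 1)))
    (heven : ∀ j < k, (2 * j - 1 : K) * a (2 * j) =
      (2 * k - 1) * (a (2 * j + 1) - (2 * j + 2) * a (2 * j + 2)))
    (htop : a (2 * k) = a (2 * k + 1)) :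
    α (β (Z K (2 * k - 1))) = β (α (Z K (2 * k - 1))) := by
  have h2k := two_mul_sub_one_ne_zero K k
  have hα := map_Z_mul_X_pow α h2k hαZ hαX
  rw [hβZ, hαZ, hβX, map_sum]
  simp only [Derivation.map_smul, hα, smul_add, smul_smul]
  rw [sum_add_distrib, add_comm]
  apply sum_range_add_sum_range_eq_of_shift_down
  · rw [Nat.mul_zero, Nat.cast_zero, mul_zero, zero_smul]
  · intro j hj
    refine smul_add_smul_eq_smul (congrArg₂ (Z K · * X ^ ·) (by omega) (by omega))
      (congrArg₂ (Z K · * X ^ ·) (by omega) (by omega)) ?_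
    rw [show 2 * (j + 1) = 2 * j + 2 by ring]
    push_cast at h2k ⊢
    field_simp
    linear_combination heven j hj
  · rw [div_self h2k, mul_one, htop, sub_sub_sub_cancel_right]

theorem map_map_X_comm (hαZ : α (Z K (2 * k - 1)) = X) (hαX : α X = Z K (-(2 * k + 1)))
    (hβZ : β (Z K (2 * k - 1)) = ∑ j ∈ range (k + 1), a (2 * j) • (Z K (2 * j - 1) * X ^ (2 * j)))
    (hβX : β X = ∑ j ∈ range (k + 1), a (2 * j + 1) • (Z K (2 * j - 2 * k) * X ^ (2 * j + 1)))
    (hodd : ∀ j < k, (2 * k - 2 * j : K) * a (2 * j + 1) =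
      (2 * k + 1) * a (2 * j + 2) + (2 * k - 1) * (2 * j + 3) * a (2 * j + 3))
    (hbottom : -(2 * k + 1 : K) * a 0 = (2 * k - 1) * a 1) :
    α (β X) = β (α X) := by
  have h2k := two_mul_sub_one_ne_zero K k
  have hα := map_Z_mul_X_pow α h2k hαZ hαX
  rw [hβX, hαX, map_sum, map_Z_eq_div_smul β h2k, hβZ, mul_sum, smul_sum]
  simp only [Derivation.map_smul, hα, smul_add, smul_smul, mul_smul_comm, ← mul_assoc, ← Z_add]
  rw [sum_add_distrib]
  apply sum_range_add_sum_range_eq_of_shift_up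
  · rw [sub_self, Int.cast_zero, zero_div, mul_zero, zero_smul]
  · refine congrArg₂ (· • ·) ?_ (congrArg₂ (Z K · * X ^ ·) (by omega) (by omega))
    push_cast at h2k ⊢
    field_simp
    linear_combination -hbottom
  · intro j hj
    refine smul_add_smul_eq_smul (congrArg₂ (Z K · * X ^ ·) (by omega) (by omega))
      (congrArg₂ (Z K · * X ^ ·) (by omega) (by omega)) ?_
    rw [show 2 * (j + 1) + 1 = 2 * j + 3 by ring, show 2 * (j + 1) = 2 * j + 2 by ring]
    push_cast at h2k ⊢
    field_simp
    linear_combination -hodd j hj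

end Commutation

end CommutingDerivations

open CommutingDerivations in
theorem stmt13_general (K : Type*) [Field K] [CharZero K] (k : ℕ) (a : ℕ → K)
    (h1 : a (2 * k) = a (2 * k + 1))
    (h2 : ∀ l, 0 < l → l ≤ k →
      a (2 * (k - l) + 1) =
        (-((2 * (k : K) + 1) / (2 * (k : K) - 1)) * a (2 * (k - l) + 2)
          - (2 * ((k : K) - (l : K)) + 3) * a (2 * (k - l) + 3))
        * ((1 - (2 * (k : K) + 1) / (2 * (k : K) - 1)) * (l : K))⁻¹)
    (h3 : ∀ l, 0 < l → l ≤ k →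
      a (2 * (k - l)) =
        (a (2 * (k - l) + 1) - (2 * ((k : K) - (l : K)) + 2) * a (2 * (k - l) + 2))
        * ((1 - (2 * (k : K) + 1) / (2 * (k : K) - 1)) * (l : K) + 1)⁻¹)
    (α β : Derivation K (Polynomial (LaurentPolynomial K)) (Polynomial (LaurentPolynomial K)))
    (hαx : α (Polynomial.C (T (2 * (k : ℤ) - 1))) = Polynomial.X)
    (hαy : α Polynomial.X = Polynomial.C (T (-(2 * (k : ℤ) + 1))))
    (hβx : β (Polynomial.C (T (2 * (k : ℤ) - 1))) =
      ∑ l ∈ range (k + 1),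
        Polynomial.C (a (2 * (k - l)) • T (2 * (k : ℤ) - 1 - 2 * (l : ℤ))) *
          Polynomial.X ^ (2 * (k - l)))
    (hβy : β Polynomial.X =
      ∑ l ∈ range (k + 1),
        Polynomial.C (a (2 * (k - l) + 1) • T (-(2 * (l : ℤ)))) *
          Polynomial.X ^ (2 * (k - l) + 1)) :
    ∀ p, α (β p) = β (α p) := by
  rw [sum_C_smul_T_mul_X_pow_even_reflect] at hβx
  rw [sum_C_smul_T_mul_X_pow_odd_reflect] at hβy
  have heven := even_step h3
  have hodd := odd_step h2
  have hbottom : -(2 * k + 1 : K) * a 0 = (2 * k - 1) * a 1 := by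
    simpa using even_odd_relation_of_steps h1 heven hodd 0 (Nat.zero_le k)
  exact commute_of_map_Z_of_map_X (two_mul_sub_one_ne_zero K k) α β
    (map_map_Z_comm k a α β hαx hαy hβx hβy heven h1)
    (map_map_X_comm k a α β hαx hαy hβx hβy hodd hbottom)

/-- On `R = K[x^{1/(2k-1)}, x^{-1/(2k-1)}, y]` (Laurent polynomials in
`z = x^{1/(2k-1)}` with polynomial variable `y`), the derivation `α` with `α(x) = y`,
`α(y) = x^{-(2k+1)/(2k-1)}` commutes with the derivation `β` with
`β(x) = Σ_{l=0}^k a_{2(k-l)} x^{1+(1-(2k+1)/(2k-1))l} y^{2(k-l)}` and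
`β(y) = Σ_{l=0}^k a_{2(k-l)+1} x^{(1-(2k+1)/(2k-1))l} y^{2(k-l)+1}`, where the `a_i ∈ K`
satisfy the stated recursion.  (Note `x^{1+(1-(2k+1)/(2k-1))l} = z^{2k-1-2l}` and
`x^{(1-(2k+1)/(2k-1))l} = z^{-2l}`.) -/
theorem stmt13 (K : Type*) [Field K] [CharZero K] (k : ℕ) (hk : 1 ≤ k) (a : ℕ → K)
    (h0 : a (2 * k + 1) ≠ 0)
    (h1 : a (2 * k) = a (2 * k + 1))
    (h2 : ∀ l, 0 < l → l ≤ k →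
      a (2 * (k - l) + 1) =
        (-((2 * (k : K) + 1) / (2 * (k : K) - 1)) * a (2 * (k - l) + 2)
          - (2 * ((k : K) - (l : K)) + 3) * a (2 * (k - l) + 3))
        * ((1 - (2 * (k : K) + 1) / (2 * (k : K) - 1)) * (l : K))⁻¹)
    (h3 : ∀ l, 0 < l → l ≤ k →
      a (2 * (k - l)) =
        (a (2 * (k - l) + 1) - (2 * ((k : K) - (l : K)) + 2) * a (2 * (k - l) + 2))
        * ((1 - (2 * (k : K) + 1) / (2 * (k : K) - 1)) * (l : K) + 1)⁻¹)
    (α β : Derivation K (Polynomial (LaurentPolynomial K)) (Polynomial (LaurentPolynomial K)))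
    (hαx : α (Polynomial.C (T (2 * (k : ℤ) - 1))) = Polynomial.X)
    (hαy : α Polynomial.X = Polynomial.C (T (-(2 * (k : ℤ) + 1))))
    (hβx : β (Polynomial.C (T (2 * (k : ℤ) - 1))) =
      ∑ l ∈ range (k + 1),
        Polynomial.C (a (2 * (k - l)) • T (2 * (k : ℤ) - 1 - 2 * (l : ℤ))) *
          Polynomial.X ^ (2 * (k - l)))
    (hβy : β Polynomial.X =
      ∑ l ∈ range (k + 1),
        Polynomial.C (a (2 * (k - l) + 1) • T (-(2 * (l : ℤ)))) *
          Polynomial.X ^ (2 * (k - l) + 1)) :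
    ∀ p, α (β p) = β (α p) :=
  stmt13_general K k a h1 h2 h3 α β hαx hαy hβx hβy
end

section
/- Let K be a field of characteristic zero and k a positive integer. With the constants a_i defined recursively by a_{2k+1} ∈ K\{0\}, a_{2k} = a_{2k+1}, and for 0 < l ≤ k: a_{2(k-l)+1} = (-(2k+1)/(2k-1)·a_{2(k-l)+2} - (2(k-l)+3)·a_{2(k-l)+3})·((1 - (2k+1)/(2k-1))·l)^{-1} and a_{2(k-l)} = (a_{2(k-l)+1} - (2(k-l)+2)·a_{2(k-l)+2})·((1 - (2k+1)/(2k-1))·l + 1)^{-1}, one has for all l with 0 ≤ l ≤ k: ((2k+1)/(2k-1))·a_{2(k-l)} = ((2(k-l)+1)/(2(k-l)-1))·a_{2(k-l)+1}. -/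
set_option maxHeartbeats 1000000 in
/-- With `a_{2k+1} ≠ 0`, `a_{2k} = a_{2k+1}` and the stated recursion for
`0 < l ≤ k`, one has `((2k+1)/(2k-1))·a_{2(k-l)} = ((2(k-l)+1)/(2(k-l)-1))·a_{2(k-l)+1}`
for all `0 ≤ l ≤ k`. -/
theorem stmt14 (K : Type*) [Field K] [CharZero K] (k : ℕ) (hk : 1 ≤ k) (a : ℕ → K)
    (h0 : a (2 * k + 1) ≠ 0)
    (h1 : a (2 * k) = a (2 * k + 1))
    (h2 : ∀ l, 0 < l → l ≤ k →
      a (2 * (k - l) + 1) =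
        (-((2 * (k : K) + 1) / (2 * (k : K) - 1)) * a (2 * (k - l) + 2)
          - (2 * ((k : K) - (l : K)) + 3) * a (2 * (k - l) + 3))
        * ((1 - (2 * (k : K) + 1) / (2 * (k : K) - 1)) * (l : K))⁻¹)
    (h3 : ∀ l, 0 < l → l ≤ k →
      a (2 * (k - l)) =
        (a (2 * (k - l) + 1) - (2 * ((k : K) - (l : K)) + 2) * a (2 * (k - l) + 2))
        * ((1 - (2 * (k : K) + 1) / (2 * (k : K) - 1)) * (l : K) + 1)⁻¹) :
    ∀ l, l ≤ k →
      (2 * (k : K) + 1) / (2 * (k : K) - 1) * a (2 * (k - l)) =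
        (2 * ((k : K) - (l : K)) + 1) / (2 * ((k : K) - (l : K)) - 1) * a (2 * (k - l) + 1) := by
  have cast1 : ∀ p q : ℕ, p ≠ q → ((p : K) ≠ (q : K)) := fun p q h => by exact_mod_cast h
  have h2k : (2 * (k : K) - 1) ≠ 0 := by
    have := cast1 (2 * k) 1 (by omega)
    push_cast at this
    intro h; apply this; linear_combination h
  intro l hl
  induction l with
  | zero =>
    simpa using congrArg (fun t => (2 * (k : K) + 1) / (2 * (k : K) - 1) * t) h1
  | succ n ih =>
    have hn : n ≤ k := by omega
    have ih' := ih hn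
    have e1 : 2 * (k - n) = 2 * (k - (n + 1)) + 2 := by omega
    rw [e1, show 2 * (k - (n + 1)) + 2 + 1 = 2 * (k - (n + 1)) + 3 from by omega] at ih'
    have hA := h2 (n + 1) (by omega) hl
    have hB := h3 (n + 1) (by omega) hl
    have d1 : 2 * (k : K) - 2 * (n : K) - 1 ≠ 0 := by
      have := cast1 (2 * k) (2 * n + 1) (by omega)
      push_cast at this
      intro h; apply this; linear_combination h
    have d2 : 2 * (k : K) - 2 * (n : K) - 3 ≠ 0 := by
      have := cast1 (2 * k) (2 * n + 3) (by omega)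
      push_cast at this
      intro h; apply this; linear_combination h
    have d3 : 2 * (k : K) - 2 * (n : K) + 1 ≠ 0 := by
      have := cast1 (2 * k + 1) (2 * n) (by omega)
      push_cast at this
      intro h; apply this; linear_combination h
    have dn : ((n : K) + 1) ≠ 0 := by
      have := cast1 (n + 1) 0 (by omega)
      push_cast at this
      exact this
    have d1' : 2 * ((k : K) - (n : K)) - 1 ≠ 0 := by
      intro h; exact d1 (by linear_combination h)
    have d3' : 2 * ((k : K) - (n : K)) + 1 ≠ 0 := by
      intro h; exact d3 (by linear_combination h)
    have d2' : 2 * ((k : K) - ((n : K) + 1)) - 1 ≠ 0 := by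
      intro h; exact d2 (by linear_combination h)
    have d2'' : 2 * ((k : K) - (n : K)) - 3 ≠ 0 := by
      intro h; exact d2 (by linear_combination h)
    push_cast at ih' hA hB ⊢
    -- explicit formula for a (2*(k-(n+1))+3) in terms of a (2*(k-(n+1))+2)
    have hC : a (2 * (k - (n + 1)) + 3) =
        ((2 * (k : K) + 1) * (2 * ((k : K) - (n : K)) - 1))
          / ((2 * (k : K) - 1) * (2 * ((k : K) - (n : K)) + 1)) * a (2 * (k - (n + 1)) + 2) := by
      rw [div_mul_eq_mul_div, eq_div_iff (mul_ne_zero h2k d3')]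
      field_simp [d1'] at ih'
      linear_combination -ih'
    -- rewrite the awkward denominators
    have hE1 : (1 - (2 * (k : K) + 1) / (2 * (k : K) - 1)) * ((n : K) + 1)
        = (-2 * ((n : K) + 1)) / (2 * (k : K) - 1) := by
      field_simp
      ring
    have hE2 : (1 - (2 * (k : K) + 1) / (2 * (k : K) - 1)) * ((n : K) + 1) + 1
        = (2 * ((k : K) - (n : K)) - 3) / (2 * (k : K) - 1) := by
      field_simp
      ring
    -- explicit formula for a (2*(k-(n+1))+1)
    have hA2 : a (2 * (k - (n + 1)) + 1) =
        (2 * (k : K) + 1) * ((k : K) - (n : K)) / ((n : K) + 1) * a (2 * (k - (n + 1)) + 2) := by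
      rw [hA, hC, hE1, inv_div]
      field_simp [d3']
      ring
    -- explicit formula for a (2*(k-(n+1)))
    have hB2 : a (2 * (k - (n + 1))) =
        ((k : K) - (n : K)) * (2 * ((k : K) - (n : K)) - 1) * (2 * (k : K) - 1)
          / (((n : K) + 1) * (2 * ((k : K) - (n : K)) - 3)) * a (2 * (k - (n + 1)) + 2) := by
      rw [hB, hA2, hE2, inv_div]
      field_simp [d2'']
      ring
    rw [hB2, hA2]
    field_simp [d2']
    ring
end

section
/- For every odd m ≥ 3, define polynomials T_i(X) ∈ ℤ[X] by T_m = T_{m-1} = 1 and, for 1 ≤ k ≤ (m-1)/2, T_{m-2k}(X) = X·T_{m-2k+1}(X) - (m-2k+2)·((k-1)(X+1)+1)·T_{m-2k+2}(X) and T_{m-2k-1}(X) = T_{m-2k}(X) - (m-2k+1)·k·(X+1)·T_{m-2k+1}(X). Define P_m(X) = ((m-1)/2·(X+1)+1)·T_1(X) - X·T_0(X). Then deg P_m ≤ (m+1)/2 and P_m(-1) ≠ 0 (in particular P_m is not the zero polynomial). -/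
open Polynomial

/-- For odd `m ≥ 3`, with `T_i ∈ ℤ[X]` defined by `T_m = T_{m-1} = 1` and
the stated recursion, `P_m = ((m-1)/2·(X+1)+1)·T_1 - X·T_0` has degree at most `(m+1)/2`
and `P_m(-1) ≠ 0` (in particular `P_m ≠ 0`). -/
theorem stmt15 (m : ℕ) (hm : 3 ≤ m) (hodd : Odd m)
    (T : ℕ → Polynomial ℤ)
    (hTm : T m = 1) (hTm1 : T (m - 1) = 1)
    (hrec1 : ∀ k, 1 ≤ k → k ≤ (m - 1) / 2 →
      T (m - 2 * k) = X * T (m - 2 * k + 1)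
        - Polynomial.C ((m : ℤ) - 2 * k + 2) *
            (Polynomial.C ((k : ℤ) - 1) * (X + 1) + 1) * T (m - 2 * k + 2))
    (hrec2 : ∀ k, 1 ≤ k → k ≤ (m - 1) / 2 →
      T (m - (2 * k + 1)) = T (m - 2 * k)
        - Polynomial.C ((m : ℤ) - 2 * k + 1) * (Polynomial.C (k : ℤ) * (X + 1)) *
            T (m - 2 * k + 1))
    (P : Polynomial ℤ)
    (hP : P = (Polynomial.C (((m - 1) / 2 : ℕ) : ℤ) * (X + 1) + 1) * T 1 - X * T 0) :
    P.natDegree ≤ (m + 1) / 2 ∧ P.eval (-1) ≠ 0 := by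
  obtain ⟨t, ht⟩ := hodd
  set n := (m - 1) / 2 with hn
  have hmn : m = 2 * n + 1 := by omega
  have key : ∀ k, k ≤ n →
      (T (m - 2 * k)).eval (-1) ≠ 0 ∧
      (T (m - (2 * k + 1))).eval (-1) = (T (m - 2 * k)).eval (-1) ∧
      (T (m - 2 * k)).natDegree ≤ k ∧ (T (m - (2 * k + 1))).natDegree ≤ k := by
    intro k
    induction k with
    | zero =>
      intro _
      have h1 : m - 2 * 0 = m := by omega
      have h2 : m - (2 * 0 + 1) = m - 1 := by omega
      rw [h1, h2, hTm, hTm1]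
      simp
    | succ k ih =>
      intro hk
      obtain ⟨ha, hb, hc, hd⟩ := ih (by omega)
      have e1 : m - 2 * (k + 1) + 1 = m - (2 * k + 1) := by omega
      have e2 : m - 2 * (k + 1) + 2 = m - 2 * k := by omega
      have r1 := hrec1 (k + 1) (by omega) hk
      have r2 := hrec2 (k + 1) (by omega) hk
      rw [e1, e2] at r1
      rw [e1] at r2
      have ev1 : (T (m - 2 * (k + 1))).eval (-1)
          = -(((m : ℤ) - 2 * k) + 1) * (T (m - 2 * k)).eval (-1) := by
        rw [r1]
        simp [hb]
        ring
      have hcoef : -(((m : ℤ) - 2 * k) + 1) ≠ 0 := by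
        have h1 : k + 1 ≤ n := hk
        omega
      have dC1 : ∀ a b : ℤ, (Polynomial.C a * (Polynomial.C b * (X + 1) + 1)).natDegree ≤ 1 := by
        intro a b; compute_degree
      have dC2 : ∀ a b : ℤ, (Polynomial.C a * (Polynomial.C b * (X + 1))).natDegree ≤ 1 := by
        intro a b; compute_degree
      have dX : ∀ (p : Polynomial ℤ) (j : ℕ), p.natDegree ≤ j → (X * p).natDegree ≤ j + 1 := by
        intro p j hp
        refine le_trans natDegree_mul_le ?_
        simp only [natDegree_X]
        omega
      have dM : ∀ (p q : Polynomial ℤ) (j : ℕ), p.natDegree ≤ 1 → q.natDegree ≤ j →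
          (p * q).natDegree ≤ j + 1 := by
        intro p q j hp hq
        refine le_trans natDegree_mul_le ?_
        omega
      refine ⟨?_, ?_, ?_, ?_⟩
      · rw [ev1]
        exact mul_ne_zero hcoef ha
      · rw [r2]
        simp
      · rw [r1]
        exact le_trans (natDegree_sub_le _ _)
          (max_le (dX _ _ hd) (dM _ _ _ (dC1 _ _) hc))
      · rw [r2]
        have step1 : (T (m - 2 * (k + 1))).natDegree ≤ k + 1 := by
          rw [r1]
          exact le_trans (natDegree_sub_le _ _)
            (max_le (dX _ _ hd) (dM _ _ _ (dC1 _ _) hc))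
        refine le_trans (natDegree_sub_le _ _) (max_le step1 ?_)
        refine le_trans natDegree_mul_le ?_
        have : (Polynomial.C ((m : ℤ) - 2 * ((k + 1 : ℕ) : ℤ) + 1) * (Polynomial.C ((k + 1 : ℕ) : ℤ) * (X + 1))).natDegree ≤ 1 := by
          push_cast
          exact dC2 _ _
        omega
  obtain ⟨ha, hb, hc, hd⟩ := key n le_rfl
  have h1 : m - 2 * n = 1 := by omega
  have h0 : m - (2 * n + 1) = 0 := by omega
  rw [h1] at ha hc
  rw [h0] at hb hd
  rw [h1] at hb
  constructor
  · rw [hP]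
    have hhalf : (m + 1) / 2 = n + 1 := by omega
    rw [hhalf]
    refine le_trans (natDegree_sub_le _ _) (max_le ?_ ?_)
    · refine le_trans natDegree_mul_le ?_
      have h2 : (Polynomial.C ((n : ℕ) : ℤ) * (X + 1) + 1).natDegree ≤ 1 := by
        compute_degree
      omega
    · refine le_trans natDegree_mul_le ?_
      simp only [natDegree_X]
      omega
  · rw [hP]
    simp [hb]
    intro h
    exact ha (by linarith)
end

section
/- For every odd m ≥ 3, with T_i(X) ∈ ℤ[X] defined by the recursion T_m = T_{m-1} = 1, T_{m-2k}(X) = X·T_{m-2k+1}(X) - (m-2k+2)·((k-1)(X+1)+1)·T_{m-2k+2}(X), T_{m-2k-1}(X) = T_{m-2k}(X) - (m-2k+1)·k·(X+1)·T_{m-2k+1}(X) (for 1 ≤ k ≤ (m-1)/2), one has T_i(-1) ≠ 0 for every 0 ≤ i ≤ m. -/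
open Polynomial

/-- For odd `m ≥ 3`, the polynomials `T_i ∈ ℤ[X]` defined by the recursion
satisfy `T_i(-1) ≠ 0` for every `0 ≤ i ≤ m`. -/
theorem stmt17 (m : ℕ) (hm : 3 ≤ m) (hodd : Odd m)
    (T : ℕ → Polynomial ℤ)
    (hTm : T m = 1) (hTm1 : T (m - 1) = 1)
    (hrec1 : ∀ k, 1 ≤ k → k ≤ (m - 1) / 2 →
      T (m - 2 * k) = X * T (m - 2 * k + 1)
        - Polynomial.C ((m : ℤ) - 2 * k + 2) *
            (Polynomial.C ((k : ℤ) - 1) * (X + 1) + 1) * T (m - 2 * k + 2))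
    (hrec2 : ∀ k, 1 ≤ k → k ≤ (m - 1) / 2 →
      T (m - (2 * k + 1)) = T (m - 2 * k)
        - Polynomial.C ((m : ℤ) - 2 * k + 1) * (Polynomial.C (k : ℤ) * (X + 1)) *
            T (m - 2 * k + 1)) :
    ∀ i, i ≤ m → (T i).eval (-1) ≠ 0 := by
  have hmod : m % 2 = 1 := Nat.odd_iff.mp hodd
  have key : ∀ k, k ≤ (m - 1) / 2 →
      (T (m - 2 * k)).eval (-1) ≠ 0 ∧
      (T (m - (2 * k + 1))).eval (-1) = (T (m - 2 * k)).eval (-1) := by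
    intro k
    induction k with
    | zero =>
      intro _
      have h1 : m - 2 * 0 = m := by omega
      have h2 : m - (2 * 0 + 1) = m - 1 := by omega
      rw [h1, h2, hTm, hTm1]
      simp
    | succ k ih =>
      intro hk
      obtain ⟨h1, h2⟩ := ih (by omega)
      have hkm : 2 * (k + 1) ≤ m - 1 := by omega
      have e1 := hrec1 (k + 1) (by omega) hk
      have e2 := hrec2 (k + 1) (by omega) hk
      have i1 : m - 2 * (k + 1) + 1 = m - (2 * k + 1) := by omega
      have i2 : m - 2 * (k + 1) + 2 = m - 2 * k := by omega
      rw [i1, i2] at e1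
      have ev1 : (T (m - 2 * (k + 1))).eval (-1)
          = -(1 + ((m : ℤ) - 2 * k)) * (T (m - 2 * k)).eval (-1) := by
        rw [e1]
        simp only [eval_sub, eval_mul, eval_add, eval_X, eval_C, eval_one]
        push_cast
        rw [h2]
        ring
      have hc : (1 + ((m : ℤ) - 2 * k)) ≠ 0 := by
        have : (2 * k + 3 : ℤ) ≤ (m : ℤ) := by exact_mod_cast (by omega : 2 * k + 3 ≤ m)
        omega
      constructor
      · rw [ev1]
        exact mul_ne_zero (by intro h; apply hc; linarith) h1
      · rw [e2]
        simp
  intro i hi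
  rcases Nat.even_or_odd (m - i) with ⟨k, hk⟩ | ⟨k, hk⟩
  · have hik : i = m - 2 * k := by omega
    have hkb : k ≤ (m - 1) / 2 := by omega
    rw [hik]
    exact (key k hkb).1
  · have hik : i = m - (2 * k + 1) := by omega
    have hkb : k ≤ (m - 1) / 2 := by omega
    rw [hik]
    rw [(key k hkb).2]
    exact (key k hkb).1
end

section
/- Let K be a field of characteristic zero and f ∈ K[x] with deg f ≥ 2. Let δ be the K-derivation on K[x,y] with δ(x) = y and δ(y) = f, and let H = y² - 2∫f dx. Then every K-derivation γ on K[x,y] commuting with δ equals q·δ for some q ∈ K[H]; in particular the K[H]-module of derivations commuting with δ is free of rank 1 generated by δ. -/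
open MvPolynomial

set_option linter.unusedSectionVars false
set_option maxHeartbeats 1000000

section Aux
variable {K : Type*} [Field K] [CharZero K]

local notation "dv" => Polynomial.derivative

lemma s18_natDeg_deriv {g : Polynomial K} (h : g.natDegree ≠ 0) :
    (dv g).natDegree = g.natDegree - 1 := by
  refine le_antisymm (Polynomial.natDegree_derivative_le g) (Polynomial.le_natDegree_of_ne_zero ?_)
  rw [Polynomial.coeff_derivative, Nat.sub_add_cancel (Nat.one_le_iff_ne_zero.2 h)]
  have h1 : g.coeff g.natDegree ≠ 0 := by
    rw [← Polynomial.leadingCoeff]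
    exact Polynomial.leadingCoeff_ne_zero.2 (fun h0 => h (by simp [h0]))
  have h2 : ((g.natDegree - 1 : ℕ) : K) + 1 ≠ 0 := by
    have : (((g.natDegree - 1 : ℕ) + 1 : ℕ) : K) ≠ 0 := Nat.cast_ne_zero.2 (by omega)
    push_cast at this; exact this
  exact mul_ne_zero h1 h2

lemma s18_deriv_lc {g : Polynomial K} (h : g.natDegree ≠ 0) :
    (dv g).leadingCoeff = g.leadingCoeff * (g.natDegree : K) := by
  rw [Polynomial.leadingCoeff, s18_natDeg_deriv h, Polynomial.coeff_derivative,
    Nat.sub_add_cancel (Nat.one_le_iff_ne_zero.2 h), Polynomial.leadingCoeff]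
  have : ((g.natDegree - 1 : ℕ) : K) + 1 = (g.natDegree : K) := by
    have := Nat.sub_add_cancel (Nat.one_le_iff_ne_zero.2 h)
    exact_mod_cast congrArg (Nat.cast (R := K)) this
  rw [this]

lemma s18_dd_zero {g : Polynomial K} (h : g.natDegree ≤ 1) : dv (dv g) = 0 := by
  have h2 : (dv g).natDegree = 0 := by
    rcases Nat.eq_zero_or_pos g.natDegree with h0 | h0
    · rw [Polynomial.eq_C_of_natDegree_eq_zero h0, Polynomial.derivative_C,
        Polynomial.natDegree_zero]
    · rw [s18_natDeg_deriv (by omega)]; omega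
  rw [Polynomial.eq_C_of_natDegree_eq_zero h2, Polynomial.derivative_C]

variable {f F : Polynomial K}

/-- the operator appearing in the odd cascade -/
noncomputable def s18Q (f F g : Polynomial K) : Polynomial K :=
  3 • (f * g) + 2 • (F * dv g)

/-- the operator appearing in the even cascade -/
noncomputable def s18R (f F g : Polynomial K) : Polynomial K :=
  dv f * g - f * dv g - 2 • (F * dv (dv g))

section
variable (hf : 2 ≤ f.natDegree) (hF : dv F = f)
include hf hF

lemma s18_f_ne : f ≠ 0 := fun h => by simp [h] at hf

lemma s18_df_ne : dv f ≠ 0 := by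
  intro h
  have := Polynomial.natDegree_eq_zero_of_derivative_eq_zero h
  omega

lemma s18_df_deg : (dv f).natDegree = f.natDegree - 1 :=
  s18_natDeg_deriv (by omega)

lemma s18_F_ne : F ≠ 0 := fun h => by
  rw [h, Polynomial.derivative_zero] at hF
  rw [← hF] at hf; simp at hf

lemma s18_F_deg : F.natDegree = f.natDegree + 1 := by
  have h1 : F.natDegree ≠ 0 := by
    intro h
    rw [Polynomial.eq_C_of_natDegree_eq_zero h, Polynomial.derivative_C] at hF
    rw [← hF] at hf; simp at hf
  have := s18_natDeg_deriv (K := K) (g := F) h1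
  rw [hF] at this; omega

lemma s18_lcF_ne : F.leadingCoeff ≠ 0 :=
  Polynomial.leadingCoeff_ne_zero.2 (s18_F_ne hf hF)

lemma s18_lcf : f.leadingCoeff = F.leadingCoeff * ((f.natDegree : K) + 1) := by
  have h1 : F.natDegree ≠ 0 := by rw [s18_F_deg hf hF]; omega
  have := s18_deriv_lc (K := K) (g := F) h1
  rw [hF, s18_F_deg hf hF] at this
  rw [this]; push_cast; ring

lemma s18_Q_ne {g : Polynomial K} (hg : g ≠ 0) : s18Q f F g ≠ 0 := by
  have hlcg : g.leadingCoeff ≠ 0 := Polynomial.leadingCoeff_ne_zero.2 hg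
  have hlcF : F.leadingCoeff ≠ 0 := s18_lcF_ne hf hF
  set n := f.natDegree with hn
  set m := g.natDegree with hm
  have key : (s18Q f F g).coeff (n + m) =
      g.leadingCoeff * (F.leadingCoeff * ((3 * (n + 1) + 2 * m : ℕ) : K)) := by
    rcases Nat.eq_zero_or_pos m with h0 | h0
    · have hdg : dv g = 0 := by
        have := Polynomial.eq_C_of_natDegree_eq_zero (hm ▸ h0 : g.natDegree = 0)
        rw [this]; exact Polynomial.derivative_C
      have e1 : (f * g).coeff (n + m) = f.leadingCoeff * g.leadingCoeff :=
        Polynomial.coeff_mul_degree_add_degree f g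
      rw [s18Q, hdg, mul_zero, smul_zero, add_zero, Polynomial.coeff_smul, e1,
        s18_lcf hf hF, h0]
      push_cast; ring
    · have hdgdeg : (dv g).natDegree = m - 1 := s18_natDeg_deriv (by omega)
      have hsum : F.natDegree + (dv g).natDegree = n + m := by
        rw [s18_F_deg hf hF, hdgdeg]; omega
      have e2 : (F * dv g).coeff (n + m) = F.leadingCoeff * (g.leadingCoeff * (m : K)) := by
        rw [← hsum, Polynomial.coeff_mul_degree_add_degree, s18_deriv_lc (by omega)]
      rw [s18Q, Polynomial.coeff_add, Polynomial.coeff_smul, Polynomial.coeff_smul,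
        e2]
      have e1 : (f * g).coeff (n + m) = f.leadingCoeff * g.leadingCoeff :=
        Polynomial.coeff_mul_degree_add_degree f g
      rw [e1, s18_lcf hf hF]
      push_cast; ring
  intro h
  rw [h, Polynomial.coeff_zero] at key
  have : ((3 * (n + 1) + 2 * m : ℕ) : K) ≠ 0 := Nat.cast_ne_zero.2 (by omega)
  exact (mul_ne_zero hlcg (mul_ne_zero hlcF this)) key.symm

lemma s18_R_lin {g : Polynomial K} (hg : g ≠ 0) (hdeg : g.natDegree ≤ 1) :
    s18R f F g ≠ 0 ∧ f.natDegree - 1 ≤ (s18R f F g).natDegree := by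
  have hdd : dv (dv g) = 0 := s18_dd_zero hdeg
  have hdf : dv f ≠ 0 := s18_df_ne hf hF
  have hlcg : g.leadingCoeff ≠ 0 := Polynomial.leadingCoeff_ne_zero.2 hg
  have hlcf : f.leadingCoeff ≠ 0 := Polynomial.leadingCoeff_ne_zero.2 (s18_f_ne hf hF)
  rcases Nat.eq_zero_or_pos g.natDegree with h0 | h0
  · have hdg : dv g = 0 := by
      rw [Polynomial.eq_C_of_natDegree_eq_zero h0]; exact Polynomial.derivative_C
    have hR : s18R f F g = dv f * g := by
      rw [s18R, hdd, hdg, mul_zero, mul_zero, smul_zero, sub_zero, sub_zero]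
    constructor
    · rw [hR]; exact mul_ne_zero hdf hg
    · rw [hR, Polynomial.natDegree_mul hdf hg, s18_df_deg hf hF]; omega
  · have h1 : g.natDegree = 1 := by omega
    have hdgdeg : (dv g).natDegree = 0 := by rw [s18_natDeg_deriv (by omega), h1]
    have hlcdg : (dv g).leadingCoeff = g.leadingCoeff * ((g.natDegree : ℕ) : K) :=
      s18_deriv_lc (by omega)
    have hdg_ne : dv g ≠ 0 := by
      intro h; rw [h, Polynomial.leadingCoeff_zero] at hlcdg
      exact (mul_ne_zero hlcg (Nat.cast_ne_zero.2 (show g.natDegree ≠ 0 by omega))) hlcdg.symm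
    set n := f.natDegree with hn
    have e1 := Polynomial.coeff_mul_degree_add_degree (dv f) g
    rw [show (dv f).natDegree + g.natDegree = n by rw [s18_df_deg hf hF]; omega] at e1
    rw [s18_deriv_lc (show f.natDegree ≠ 0 by omega)] at e1
    have e2 := Polynomial.coeff_mul_degree_add_degree f (dv g)
    rw [show f.natDegree + (dv g).natDegree = n by rw [hdgdeg]; omega] at e2
    rw [hlcdg, h1] at e2
    have key : (s18R f F g).coeff n = f.leadingCoeff * g.leadingCoeff * ((n : K) - 1) := by
      rw [s18R, hdd, mul_zero, smul_zero, sub_zero, Polynomial.coeff_sub, e1, e2]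
      push_cast
      ring
    have hne : (s18R f F g).coeff n ≠ 0 := by
      rw [key]
      have h2 : ((n : K) - 1) = ((n - 1 : ℕ) : K) := by
        have : (1:ℕ) ≤ n := by omega
        push_cast [this]; ring
      rw [h2]
      exact mul_ne_zero (mul_ne_zero hlcf hlcg) (Nat.cast_ne_zero.2 (by omega))
    constructor
    · intro h; rw [h, Polynomial.coeff_zero] at hne; exact hne rfl
    · exact le_trans (by omega) (Polynomial.le_natDegree_of_ne_zero hne)

set_option maxHeartbeats 1000000 in
lemma s18_R_big {g : Polynomial K} (hg : g ≠ 0) (hdeg : f.natDegree + 1 < 2 * g.natDegree) :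
    s18R f F g ≠ 0 ∧ (s18R f F g).natDegree = f.natDegree + g.natDegree - 1 := by
  set n := f.natDegree with hn
  set m := g.natDegree with hm
  have hm2 : 2 ≤ m := by omega
  have hlcg : g.leadingCoeff ≠ 0 := Polynomial.leadingCoeff_ne_zero.2 hg
  have hlcf : f.leadingCoeff ≠ 0 := Polynomial.leadingCoeff_ne_zero.2 (s18_f_ne hf hF)
  have hlcF : F.leadingCoeff ≠ 0 := s18_lcF_ne hf hF
  have hdf : dv f ≠ 0 := s18_df_ne hf hF
  have hdgdeg : (dv g).natDegree = m - 1 := s18_natDeg_deriv (by omega)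
  have hlcdg : (dv g).leadingCoeff = g.leadingCoeff * (m : K) := s18_deriv_lc (by omega)
  have hdg_ne : dv g ≠ 0 := by
    intro h; rw [h, Polynomial.leadingCoeff_zero] at hlcdg
    exact (mul_ne_zero hlcg (Nat.cast_ne_zero.2 (show m ≠ 0 by omega))) hlcdg.symm
  have hddgdeg : (dv (dv g)).natDegree = m - 2 := by
    rw [s18_natDeg_deriv (by omega), hdgdeg]; omega
  have hlcddg : (dv (dv g)).leadingCoeff = g.leadingCoeff * (m : K) * ((m - 1 : ℕ) : K) := by
    rw [s18_deriv_lc (K := K) (g := dv g) (by omega), hlcdg, hdgdeg]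
  have hddg_ne : dv (dv g) ≠ 0 := by
    intro h; rw [h, Polynomial.leadingCoeff_zero] at hlcddg
    exact (mul_ne_zero (mul_ne_zero hlcg (Nat.cast_ne_zero.2 (show m ≠ 0 by omega)))
      (Nat.cast_ne_zero.2 (show m - 1 ≠ 0 by omega))) hlcddg.symm
  set d := n + m - 1 with hd
  have e1 := Polynomial.coeff_mul_degree_add_degree (dv f) g
  rw [show (dv f).natDegree + g.natDegree = d by rw [s18_df_deg hf hF]; omega] at e1
  rw [s18_deriv_lc (show f.natDegree ≠ 0 by omega)] at e1
  have e2 := Polynomial.coeff_mul_degree_add_degree f (dv g)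
  rw [show f.natDegree + (dv g).natDegree = d by rw [hdgdeg]; omega] at e2
  rw [hlcdg] at e2
  have e3 := Polynomial.coeff_mul_degree_add_degree F (dv (dv g))
  rw [show F.natDegree + (dv (dv g)).natDegree = d by rw [s18_F_deg hf hF, hddgdeg]; omega] at e3
  rw [hlcddg] at e3
  have key : (s18R f F g).coeff d =
      ((((n:ℤ) * ((n:ℤ)+1) - (m:ℤ) * ((n:ℤ)+1) - 2 * (m:ℤ) * ((m:ℤ) - 1)) : ℤ) : K)
        * (F.leadingCoeff * g.leadingCoeff) := by
    rw [s18R, Polynomial.coeff_sub, Polynomial.coeff_sub, Polynomial.coeff_smul, e1, e2, e3,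
      s18_lcf hf hF]
    have h1 : (1:ℕ) ≤ m := by omega
    push_cast [h1]
    ring
  have hz : (((n:ℤ) * ((n:ℤ)+1) - (m:ℤ) * ((n:ℤ)+1) - 2 * (m:ℤ) * ((m:ℤ) - 1)) : ℤ) ≠ 0 := by
    have hmn : (n:ℤ) + 1 < 2 * (m:ℤ) := by exact_mod_cast hdeg
    have hm2' : (2:ℤ) ≤ (m:ℤ) := by exact_mod_cast hm2
    have hn2 : (2:ℤ) ≤ (n:ℤ) := by exact_mod_cast hf
    nlinarith
  have hcoeff : (s18R f F g).coeff d ≠ 0 := by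
    rw [key]
    exact mul_ne_zero (Int.cast_ne_zero.2 hz) (mul_ne_zero hlcF hlcg)
  have hRne : s18R f F g ≠ 0 := by
    intro h; rw [h, Polynomial.coeff_zero] at hcoeff; exact hcoeff rfl
  refine ⟨hRne, le_antisymm ?_ (Polynomial.le_natDegree_of_ne_zero hcoeff)⟩
  have b1 : (dv f * g).natDegree ≤ d := by
    rw [Polynomial.natDegree_mul hdf hg, s18_df_deg hf hF]; omega
  have b2 : (f * dv g).natDegree ≤ d := by
    rw [Polynomial.natDegree_mul (s18_f_ne hf hF) hdg_ne, hdgdeg]; omega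
  have b3 : (2 • (F * dv (dv g))).natDegree ≤ d := by
    rw [nsmul_eq_mul]
    refine le_trans Polynomial.natDegree_mul_le ?_
    rw [Polynomial.natDegree_natCast, Polynomial.natDegree_mul (s18_F_ne hf hF) hddg_ne,
      s18_F_deg hf hF, hddgdeg]; omega
  refine le_trans (Polynomial.natDegree_sub_le _ _) ?_
  rw [max_le_iff]
  refine ⟨le_trans (Polynomial.natDegree_sub_le _ _) ?_, b3⟩
  rw [max_le_iff]; exact ⟨b1, b2⟩

lemma s18_R_zero : s18R f F 0 = 0 := by simp [s18R]

lemma s18_antider2 {h R' : Polynomial K} (heq : dv (dv h) = R') (hne : R' ≠ 0)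
    (hdeg : f.natDegree - 1 ≤ R'.natDegree) :
    h ≠ 0 ∧ f.natDegree + 1 < 2 * h.natDegree := by
  have hh : h ≠ 0 := by rintro rfl; simp at heq; exact hne heq.symm
  have h2 : 2 ≤ h.natDegree := by
    by_contra hlt
    have := s18_dd_zero (K := K) (g := h) (by omega)
    rw [heq] at this
    exact hne this
  have hd1 : (dv h).natDegree = h.natDegree - 1 := s18_natDeg_deriv (by omega)
  have hd2 : (dv (dv h)).natDegree = h.natDegree - 2 := by
    rw [s18_natDeg_deriv (by omega), hd1]; omega
  rw [heq] at hd2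
  constructor
  · exact hh
  · omega

lemma s18_cascadeV (c : ℕ → Polynomial K)
    (h0 : s18Q f F (c 0) = 0)
    (hk : ∀ k, dv (c k) = -(s18Q f F (c (k+1)))) :
    ∀ k, c k = 0 := by
  have hz : ∀ k, c k = 0 → c (k+1) = 0 := by
    intro k hck
    by_contra hne
    have hQ := s18_Q_ne hf hF (g := c (k+1)) hne
    have := hk k
    rw [hck, Polynomial.derivative_zero] at this
    apply hQ
    have h2 : s18Q f F (c (k+1)) = - 0 := by rw [this, neg_neg]
    simpa using h2
  intro k
  induction k with
  | zero =>
    by_contra hne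
    exact s18_Q_ne hf hF hne h0
  | succ k ih => exact hz k ih

lemma s18_cascadeU (c : ℕ → Polynomial K) (D0 : ℕ)
    (hfin : ∀ k, D0 < k → c k = 0)
    (h0 : s18R f F (c 0) = 0)
    (hk : ∀ k, dv (dv (c k)) = s18R f F (c (k+1))) :
    ∀ k, c k = 0 := by
  by_contra hcon
  push_neg at hcon
  obtain ⟨k0, hk0⟩ := hcon
  classical
  set D := Nat.findGreatest (fun k => c k ≠ 0) D0 with hDdef
  have hk0le : k0 ≤ D0 := by
    by_contra hgt; exact hk0 (hfin k0 (by omega))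
  have hD : c D ≠ 0 := Nat.findGreatest_spec (P := fun k => c k ≠ 0) hk0le hk0
  have hDtop : ∀ k, D < k → c k = 0 := by
    intro k hk'
    by_cases hkD0 : k ≤ D0
    · by_contra hne
      exact Nat.findGreatest_is_greatest hk' hkD0 hne
    · exact hfin k (by omega)
  have hdd_top : dv (dv (c D)) = 0 := by
    rw [hk D, hDtop (D+1) (by omega), s18_R_zero hf hF]
  have hDlin : (c D).natDegree ≤ 1 := by
    by_contra hbig
    have h1 : (dv (c D)).natDegree = (c D).natDegree - 1 := s18_natDeg_deriv (by omega)
    have h2 := Polynomial.natDegree_eq_zero_of_derivative_eq_zero hdd_top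
    rw [h1] at h2; omega
  rcases Nat.eq_zero_or_pos D with hD0 | hDpos
  · rw [hD0] at hD hDlin
    exact (s18_R_lin hf hF hD hDlin).1 h0
  · have inv : ∀ j, j < D →
        c (D - 1 - j) ≠ 0 ∧ f.natDegree + 1 < 2 * (c (D - 1 - j)).natDegree := by
      intro j
      induction j with
      | zero =>
        intro _
        obtain ⟨hRne, hRdeg⟩ := s18_R_lin hf hF hD hDlin
        have heq : dv (dv (c (D - 1 - 0))) = s18R f F (c D) := by
          have := hk (D - 1)
          rw [show D - 1 + 1 = D from by omega] at this
          simpa using this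
        exact s18_antider2 hf hF heq hRne hRdeg
      | succ j ih =>
        intro hj
        obtain ⟨hne, hdeg⟩ := ih (by omega)
        obtain ⟨hRne, hRdeg⟩ := s18_R_big hf hF hne hdeg
        have heq : dv (dv (c (D - 1 - (j+1)))) = s18R f F (c (D - 1 - j)) := by
          have := hk (D - 1 - (j + 1))
          rw [show D - 1 - (j+1) + 1 = D - 1 - j from by omega] at this
          exact this
        exact s18_antider2 hf hF heq hRne (by omega)
    have hfin2 := inv (D - 1) (by omega)
    rw [show D - 1 - (D - 1) = 0 from by omega] at hfin2
    exact (s18_R_big hf hF hfin2.1 hfin2.2).1 h0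

end
end Aux

noncomputable section
set_option linter.unusedSectionVars false
variable {K : Type*} [Field K] [CharZero K]

local notation "B" => Polynomial (Polynomial K)
local notation "dv" => Polynomial.derivative

/-- coefficient-wise derivative on K[x][y] -/
def s18Dc : Derivation K (Polynomial (Polynomial K)) (Polynomial (Polynomial K)) :=
  (PolynomialModule.equivPolynomialSelf (R := Polynomial K)).compDer
    (Polynomial.derivative' (R := K)).mapCoeffs

lemma s18Dc_coeff (w : B) (i : ℕ) :
    (s18Dc w).coeff i = dv (w.coeff i) := rfl

lemma s18Dc_C (g : Polynomial K) :
    s18Dc (Polynomial.C g : B) = Polynomial.C (dv g) := by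
  ext i
  rw [s18Dc_coeff]
  rcases Nat.eq_zero_or_pos i with h | h
  · simp [h]
  · simp [Polynomial.coeff_C, Nat.pos_iff_ne_zero.mp h]

lemma s18Dc_X : s18Dc (Polynomial.X : B) = 0 := by
  ext i
  rw [s18Dc_coeff]
  by_cases h1 : i = 1
  · simp [h1]
  · simp [Polynomial.coeff_X, if_neg (show ¬(1 = i) by omega)]

/-- y-derivative on K[x][y] as K-derivation -/
def s18dY : Derivation K (Polynomial (Polynomial K)) (Polynomial (Polynomial K)) :=
  (Polynomial.derivative' (R := Polynomial K)).restrictScalars K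

lemma s18dY_apply (w : B) : s18dY w = dv w := rfl

/-- adjoin fact -/
lemma s18_adjoin : Algebra.adjoin K {(Polynomial.C Polynomial.X : B), Polynomial.X} = ⊤ := by
  rw [eq_top_iff]
  have hX : (Polynomial.X : B) ∈ Algebra.adjoin K {(Polynomial.C Polynomial.X : B), Polynomial.X} :=
    Algebra.subset_adjoin (by simp)
  have hCX : (Polynomial.C Polynomial.X : B) ∈
      Algebra.adjoin K {(Polynomial.C Polynomial.X : B), Polynomial.X} :=
    Algebra.subset_adjoin (by simp)
  have hC : ∀ g : Polynomial K, (Polynomial.C g : B) ∈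
      Algebra.adjoin K {(Polynomial.C Polynomial.X : B), Polynomial.X} := by
    intro g
    induction g using Polynomial.induction_on' with
    | add p q hp hq => rw [map_add]; exact add_mem hp hq
    | monomial j c =>
      rw [← Polynomial.C_mul_X_pow_eq_monomial, map_mul, map_pow]
      exact mul_mem (Subalgebra.algebraMap_mem _ c) (pow_mem hCX j)
  intro w hw
  clear hw
  induction w using Polynomial.induction_on' with
  | add p q hp hq => exact add_mem hp hq
  | monomial i g =>
    rw [← Polynomial.C_mul_X_pow_eq_monomial]
    exact mul_mem (hC g) (pow_mem hX i)

lemma s18_der_ext {D1 D2 : Derivation K (Polynomial (Polynomial K)) (Polynomial (Polynomial K))}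
    (h1 : D1 (Polynomial.C Polynomial.X) = D2 (Polynomial.C Polynomial.X))
    (h2 : D1 Polynomial.X = D2 Polynomial.X) : D1 = D2 := by
  refine Derivation.ext_of_adjoin_eq_top _ s18_adjoin ?_
  rintro x (rfl | rfl)
  · exact h1
  · exact h2

/-- chain rule for aeval of a base polynomial under any derivation -/
lemma s18_chain {A : Type*} [CommRing A] [Algebra K A] (D : Derivation K A A) (z : A)
    (p : Polynomial K) :
    D (Polynomial.aeval z p) = Polynomial.aeval z (dv p) * D z := by
  induction p using Polynomial.induction_on' with
  | add p q hp hq => simp only [map_add, add_mul, hp, hq]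
  | monomial i c =>
    rw [Polynomial.aeval_monomial, Derivation.leibniz, Derivation.map_algebraMap, smul_zero,
      add_zero, Polynomial.derivative_monomial, Polynomial.aeval_monomial, Derivation.leibniz_pow]
    simp only [smul_eq_mul, map_mul, map_natCast, nsmul_eq_mul]
    ring

lemma s18Dc_monomial (i : ℕ) (g : Polynomial K) :
    s18Dc (Polynomial.monomial i g : B) = Polynomial.monomial i (dv g) := by
  ext j
  rw [s18Dc_coeff, Polynomial.coeff_monomial, Polynomial.coeff_monomial]
  by_cases h : i = j <;> simp [h]

/-- the derivation δ on K[x][y]: x ↦ y, y ↦ f(x) -/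
def s18Δ (f : Polynomial K) : Derivation K (Polynomial (Polynomial K)) (Polynomial (Polynomial K)) :=
  (Polynomial.X : B) • s18Dc + (Polynomial.C f : B) • s18dY

lemma s18Δ_apply (f : Polynomial K) (w : B) :
    s18Δ f w = Polynomial.X * s18Dc w + Polynomial.C f * dv w := by
  simp [s18Δ, s18dY_apply, smul_eq_mul]

lemma s18Δ_C (f g : Polynomial K) :
    s18Δ f (Polynomial.C g : B) = Polynomial.X * Polynomial.C (dv g) := by
  rw [s18Δ_apply, s18Dc_C, Polynomial.derivative_C, mul_zero, add_zero]

lemma s18Δ_X (f : Polynomial K) : s18Δ f (Polynomial.X : B) = Polynomial.C f := by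
  rw [s18Δ_apply, s18Dc_X, mul_zero, zero_add, Polynomial.derivative_X, mul_one]

/-- the derivation D₁ = ∂/∂x + 2f ∂/∂s on K[x][s] -/
def s18D1 (f : Polynomial K) : Derivation K (Polynomial (Polynomial K)) (Polynomial (Polynomial K)) :=
  s18Dc + (2 * Polynomial.C f : B) • s18dY

lemma s18D1_apply (f : Polynomial K) (w : B) :
    s18D1 f w = s18Dc w + 2 * Polynomial.C f * dv w := by
  simp [s18D1, s18dY_apply, smul_eq_mul]

lemma s18D1_C (f g : Polynomial K) :
    s18D1 f (Polynomial.C g : B) = Polynomial.C (dv g) := by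
  rw [s18D1_apply, s18Dc_C, Polynomial.derivative_C, mul_zero, add_zero]

lemma s18D1_X (f : Polynomial K) : s18D1 f (Polynomial.X : B) = 2 * Polynomial.C f := by
  rw [s18D1_apply, s18Dc_X, Polynomial.derivative_X, mul_one, zero_add]

/-- derivations that act like d/dx on constants kill compositions with constants of the derivation -/
lemma s18_comp_const (D : Derivation K (Polynomial (Polynomial K)) (Polynomial (Polynomial K)))
    (hDC : ∀ g : Polynomial K, D (Polynomial.C g) = Polynomial.C (dv g))
    (τ : B) (hτ : D τ = 0) (w : B) :
    D (w.comp τ) = (s18Dc w).comp τ := by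
  induction w using Polynomial.induction_on' with
  | add p q hp hq => rw [Polynomial.add_comp, map_add, hp, hq, map_add, Polynomial.add_comp]
  | monomial i g =>
    rw [← Polynomial.C_mul_X_pow_eq_monomial, Polynomial.mul_comp, Polynomial.C_comp,
      Polynomial.pow_comp, Polynomial.X_comp, Derivation.leibniz, Derivation.leibniz_pow, hτ,
      smul_zero, smul_zero, smul_zero, zero_add, smul_eq_mul, hDC]
    have h2 : s18Dc (Polynomial.C g * Polynomial.X ^ i : B) = Polynomial.C (dv g) * Polynomial.X ^ i := by
      rw [Polynomial.C_mul_X_pow_eq_monomial, s18Dc_monomial, ← Polynomial.C_mul_X_pow_eq_monomial]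
    rw [h2, Polynomial.mul_comp, Polynomial.C_comp, Polynomial.pow_comp, Polynomial.X_comp]
    ring

lemma s18Dc_expand (w : B) :
    s18Dc (Polynomial.expand (Polynomial K) 2 w) = Polynomial.expand (Polynomial K) 2 (s18Dc w) := by
  induction w using Polynomial.induction_on' with
  | add p q hp hq => rw [map_add, map_add, hp, hq, ← map_add, ← map_add]
  | monomial i g =>
    rw [← Polynomial.C_mul_X_pow_eq_monomial, map_mul, Polynomial.expand_C, map_pow,
      Polynomial.expand_X, ← pow_mul]
    have h1 : ∀ u : Polynomial K, s18Dc (Polynomial.C u * Polynomial.X ^ (2 * i) : B)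
        = Polynomial.C (dv u) * Polynomial.X ^ (2 * i) := by
      intro u
      rw [Polynomial.C_mul_X_pow_eq_monomial, s18Dc_monomial, ← Polynomial.C_mul_X_pow_eq_monomial]
    have h2 : s18Dc (Polynomial.C g * Polynomial.X ^ i : B) = Polynomial.C (dv g) * Polynomial.X ^ i := by
      rw [Polynomial.C_mul_X_pow_eq_monomial, s18Dc_monomial, ← Polynomial.C_mul_X_pow_eq_monomial]
    rw [h1, h2, map_mul, Polynomial.expand_C, map_pow, Polynomial.expand_X, ← pow_mul]

lemma s18Δ_expand (f : Polynomial K) (w : B) :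
    s18Δ f (Polynomial.expand (Polynomial K) 2 w)
      = Polynomial.X * Polynomial.expand (Polynomial K) 2 (s18D1 f w) := by
  rw [s18Δ_apply, s18Dc_expand, Polynomial.derivative_expand, s18D1_apply, map_add, map_mul,
    map_mul, Polynomial.expand_C]
  simp only [pow_one, Nat.cast_ofNat, map_ofNat]
  ring

lemma s18Δ_X_mul_expand (f : Polynomial K) (v : B) :
    s18Δ f (Polynomial.X * Polynomial.expand (Polynomial K) 2 v)
      = Polynomial.expand (Polynomial K) 2 (Polynomial.C f * v + Polynomial.X * s18D1 f v) := by
  rw [Derivation.leibniz, s18Δ_X, s18Δ_expand, smul_eq_mul, smul_eq_mul, map_add, map_mul,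
    Polynomial.expand_C, map_mul, Polynomial.expand_X]
  ring

lemma s18_parity (A : B) :
    ∃ u v : B, A = Polynomial.expand (Polynomial K) 2 u
      + Polynomial.X * Polynomial.expand (Polynomial K) 2 v := by
  induction A using Polynomial.induction_on' with
  | add p q hp hq =>
    obtain ⟨u1, v1, h1⟩ := hp
    obtain ⟨u2, v2, h2⟩ := hq
    exact ⟨u1 + u2, v1 + v2, by rw [h1, h2, map_add, map_add]; ring⟩
  | monomial i g =>
    rcases Nat.even_or_odd i with ⟨k, hk⟩ | ⟨k, hk⟩
    · refine ⟨Polynomial.monomial k g, 0, ?_⟩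
      rw [map_zero, mul_zero, add_zero, ← Polynomial.C_mul_X_pow_eq_monomial,
        ← Polynomial.C_mul_X_pow_eq_monomial, map_mul, Polynomial.expand_C, map_pow,
        Polynomial.expand_X, ← pow_mul]
      rw [hk]; ring_nf
    · refine ⟨0, Polynomial.monomial k g, ?_⟩
      rw [map_zero, zero_add, ← Polynomial.C_mul_X_pow_eq_monomial,
        ← Polynomial.C_mul_X_pow_eq_monomial, map_mul, Polynomial.expand_C, map_pow,
        Polynomial.expand_X, ← pow_mul]
      rw [hk, pow_add, pow_one]; ring

lemma s18_parity_zero {u v : B}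
    (h : Polynomial.expand (Polynomial K) 2 u + Polynomial.X * Polynomial.expand (Polynomial K) 2 v
      = 0) : u = 0 ∧ v = 0 := by
  have hu : u = 0 := by
    apply Polynomial.ext; intro k
    have h2 := congrArg (fun z => Polynomial.coeff z (2 * k)) h
    simp only [Polynomial.coeff_add, Polynomial.coeff_zero] at h2
    rw [Polynomial.coeff_expand_mul' (by norm_num)] at h2
    have hodd : (Polynomial.X * Polynomial.expand (Polynomial K) 2 v).coeff (2 * k) = 0 := by
      rcases Nat.eq_zero_or_pos k with h0 | h0
      · rw [h0, mul_zero, Polynomial.mul_coeff_zero, Polynomial.coeff_X_zero, zero_mul]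
      · rw [show 2 * k = (2 * k - 1) + 1 from by omega, Polynomial.coeff_X_mul,
          Polynomial.coeff_expand (by norm_num)]
        rw [if_neg (by omega)]
    rw [hodd, add_zero] at h2
    simpa using h2
  refine ⟨hu, ?_⟩
  rw [hu, map_zero, zero_add] at h
  rcases mul_eq_zero.mp h with h1 | h1
  · exact absurd h1 Polynomial.X_ne_zero
  · exact (Polynomial.expand_eq_zero (by norm_num)).mp h1

lemma s18_parity_unique {u v u' v' : B}
    (h : Polynomial.expand (Polynomial K) 2 u + Polynomial.X * Polynomial.expand (Polynomial K) 2 v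
      = Polynomial.expand (Polynomial K) 2 u'
        + Polynomial.X * Polynomial.expand (Polynomial K) 2 v') : u = u' ∧ v = v' := by
  have h0 : Polynomial.expand (Polynomial K) 2 (u - u')
      + Polynomial.X * Polynomial.expand (Polynomial K) 2 (v - v') = 0 := by
    rw [map_sub, map_sub]; linear_combination h
  obtain ⟨h1, h2⟩ := s18_parity_zero h0
  exact ⟨sub_eq_zero.mp h1, sub_eq_zero.mp h2⟩

section Core
variable (f F : Polynomial K) (hf : 2 ≤ f.natDegree) (hF : dv F = f)

lemma s18_tau_sigma :
    ((Polynomial.X : B) - Polynomial.C (2 * F)).comp ((Polynomial.X : B) + Polynomial.C (2 * F))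
      = Polynomial.X := by
  rw [Polynomial.sub_comp, Polynomial.X_comp, Polynomial.C_comp]; ring

lemma s18_sigma_tau :
    ((Polynomial.X : B) + Polynomial.C (2 * F)).comp ((Polynomial.X : B) - Polynomial.C (2 * F))
      = Polynomial.X := by
  rw [Polynomial.add_comp, Polynomial.X_comp, Polynomial.C_comp]; ring

lemma s18_comp_tau_inj {w : B}
    (h : w.comp ((Polynomial.X : B) - Polynomial.C (2 * F)) = 0) : w = 0 := by
  have := congrArg (fun z => Polynomial.comp z ((Polynomial.X : B) + Polynomial.C (2 * F))) h
  simp only [Polynomial.zero_comp] at this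
  rwa [Polynomial.comp_assoc, s18_tau_sigma, Polynomial.comp_X] at this

include hF in
lemma s18_D1_tau : s18D1 f ((Polynomial.X : B) - Polynomial.C (2 * F)) = 0 := by
  have h2F : dv (2 * F) = 2 * f := by
    rw [← hF]; simp [Polynomial.derivative_mul]
  rw [map_sub, s18D1_X, s18D1_C, h2F, map_mul, map_ofNat]
  ring

include hf hF in
lemma s18_core (A : B) (hA : s18Δ f (s18Δ f A) = Polynomial.C (dv f) * A) :
    ∃ p : Polynomial K, A = Polynomial.X *
      ((p.map (Polynomial.C : K →+* Polynomial K)).comp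
        ((Polynomial.X : B) ^ 2 - Polynomial.C (2 * F))) := by
  set τ : B := (Polynomial.X : B) - Polynomial.C (2 * F) with hτdef
  set σ : B := (Polynomial.X : B) + Polynomial.C (2 * F) with hσdef
  have hτ0 : s18D1 f τ = 0 := s18_D1_tau f F hF
  have hshift : ∀ z : B, s18D1 f (z.comp τ) = (s18Dc z).comp τ :=
    s18_comp_const (s18D1 f) (s18D1_C f) τ hτ0
  obtain ⟨u, v, hA0⟩ := s18_parity A
  -- compute Δ A
  have hΔA : s18Δ f A = Polynomial.expand (Polynomial K) 2
        (Polynomial.C f * v + Polynomial.X * s18D1 f v)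
      + Polynomial.X * Polynomial.expand (Polynomial K) 2 (s18D1 f u) := by
    rw [hA0, map_add, s18Δ_expand, s18Δ_X_mul_expand, add_comm]
  have hΔΔA : s18Δ f (s18Δ f A) = Polynomial.expand (Polynomial K) 2
        (Polynomial.C f * s18D1 f u + Polynomial.X * s18D1 f (s18D1 f u))
      + Polynomial.X * Polynomial.expand (Polynomial K) 2
        (s18D1 f (Polynomial.C f * v + Polynomial.X * s18D1 f v)) := by
    rw [hΔA, map_add, s18Δ_expand, s18Δ_X_mul_expand, add_comm]
  have hRHS : Polynomial.C (dv f) * A = Polynomial.expand (Polynomial K) 2 (Polynomial.C (dv f) * u)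
      + Polynomial.X * Polynomial.expand (Polynomial K) 2 (Polynomial.C (dv f) * v) := by
    rw [hA0, map_mul, map_mul, Polynomial.expand_C]; ring
  rw [hΔΔA, hRHS] at hA
  obtain ⟨equ, eqv⟩ := s18_parity_unique hA
  -- the odd part: D1 v = 0
  have hDv : s18D1 f v = 0 := by
    have hV : (3:ℕ) • (Polynomial.C f * s18D1 f v) + Polynomial.X * s18D1 f (s18D1 f v) = 0 := by
      have e := eqv
      rw [map_add, Derivation.leibniz, Derivation.leibniz, s18D1_C, s18D1_X] at e
      simp only [smul_eq_mul] at e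
      have h3 : ((3:ℕ) : B) = (3 : B) := by norm_num
      rw [nsmul_eq_mul, h3]
      linear_combination e
    -- shift
    set wt : B := (s18D1 f v).comp σ with hwt
    have hw : s18D1 f v = wt.comp τ := by
      rw [hwt, Polynomial.comp_assoc, s18_sigma_tau, Polynomial.comp_X]
    have hVt : (3:ℕ) • (Polynomial.C f * wt) + σ * s18Dc wt = 0 := by
      apply s18_comp_tau_inj (F := F)
      have : ((3:ℕ) • (Polynomial.C f * wt) + σ * s18Dc wt).comp τ
          = (3:ℕ) • (Polynomial.C f * wt.comp τ) + σ.comp τ * (s18Dc wt).comp τ := by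
        rw [Polynomial.add_comp, Polynomial.smul_comp, Polynomial.mul_comp, Polynomial.C_comp,
          Polynomial.mul_comp]
      rw [this, s18_sigma_tau, ← hshift wt, ← hw]
      exact hV
    have hQ0 : s18Q f F (wt.coeff 0) = 0 := by
      have h := congrArg (fun z => Polynomial.coeff z 0) hVt
      simp only [Polynomial.coeff_add, Polynomial.coeff_smul, Polynomial.coeff_C_mul,
        Polynomial.coeff_zero] at h
      have hσc : (σ * s18Dc wt).coeff 0 = 2 * F * dv (wt.coeff 0) := by
        rw [hσdef, add_mul, Polynomial.coeff_add, Polynomial.mul_coeff_zero,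
          Polynomial.coeff_X_zero, zero_mul, zero_add, Polynomial.coeff_C_mul, s18Dc_coeff]
      rw [hσc] at h
      rw [s18Q]
      simp only [nsmul_eq_mul] at h ⊢
      push_cast at h ⊢
      linear_combination h
    have hQk : ∀ k, dv (wt.coeff k) = -(s18Q f F (wt.coeff (k+1))) := by
      intro k
      have h := congrArg (fun z => Polynomial.coeff z (k+1)) hVt
      simp only [Polynomial.coeff_add, Polynomial.coeff_smul, Polynomial.coeff_C_mul,
        Polynomial.coeff_zero] at h
      have hσc : (σ * s18Dc wt).coeff (k+1)
          = dv (wt.coeff k) + 2 * F * dv (wt.coeff (k+1)) := by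
        rw [hσdef, add_mul, Polynomial.coeff_add, Polynomial.coeff_X_mul, Polynomial.coeff_C_mul,
          s18Dc_coeff, s18Dc_coeff]
      rw [hσc] at h
      rw [s18Q]
      simp only [nsmul_eq_mul] at h ⊢
      push_cast at h ⊢
      linear_combination h
    have hall := s18_cascadeV hf hF (fun k => wt.coeff k) hQ0 hQk
    have hwt0 : wt = 0 := Polynomial.ext (fun k => by simpa using hall k)
    rw [hw, hwt0, Polynomial.zero_comp]
  -- the even part: u = 0
  have hu0 : u = 0 := by
    set ut : B := u.comp σ with hutdef
    have hu : u = ut.comp τ := by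
      rw [hutdef, Polynomial.comp_assoc, s18_sigma_tau, Polynomial.comp_X]
    have hUt : Polynomial.C f * s18Dc ut + σ * s18Dc (s18Dc ut)
        - Polynomial.C (dv f) * ut = 0 := by
      apply s18_comp_tau_inj (F := F)
      have hexp : (Polynomial.C f * s18Dc ut + σ * s18Dc (s18Dc ut)
            - Polynomial.C (dv f) * ut).comp τ
          = Polynomial.C f * (s18Dc ut).comp τ + σ.comp τ * (s18Dc (s18Dc ut)).comp τ
            - Polynomial.C (dv f) * (ut.comp τ) := by
        rw [Polynomial.sub_comp, Polynomial.add_comp, Polynomial.mul_comp, Polynomial.C_comp,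
          Polynomial.mul_comp, Polynomial.mul_comp, Polynomial.C_comp]
      rw [hexp, s18_sigma_tau, ← hshift (s18Dc ut), ← hshift ut, ← hu]
      linear_combination equ
    have hR0 : s18R f F (ut.coeff 0) = 0 := by
      have h := congrArg (fun z => Polynomial.coeff z 0) hUt
      simp only [Polynomial.coeff_sub, Polynomial.coeff_add, Polynomial.coeff_C_mul,
        Polynomial.coeff_zero, s18Dc_coeff] at h
      have hσc : (σ * s18Dc (s18Dc ut)).coeff 0 = 2 * F * dv (dv (ut.coeff 0)) := by
        rw [hσdef, add_mul, Polynomial.coeff_add, Polynomial.mul_coeff_zero,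
          Polynomial.coeff_X_zero, zero_mul, zero_add, Polynomial.coeff_C_mul,
          s18Dc_coeff, s18Dc_coeff]
      rw [hσc] at h
      rw [s18R]
      simp only [nsmul_eq_mul] at h ⊢
      push_cast at h ⊢
      linear_combination -h
    have hRk : ∀ k, dv (dv (ut.coeff k)) = s18R f F (ut.coeff (k+1)) := by
      intro k
      have h := congrArg (fun z => Polynomial.coeff z (k+1)) hUt
      simp only [Polynomial.coeff_sub, Polynomial.coeff_add, Polynomial.coeff_C_mul,
        Polynomial.coeff_zero, s18Dc_coeff] at h
      have hσc : (σ * s18Dc (s18Dc ut)).coeff (k+1)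
          = dv (dv (ut.coeff k)) + 2 * F * dv (dv (ut.coeff (k+1))) := by
        rw [hσdef, add_mul, Polynomial.coeff_add, Polynomial.coeff_X_mul, Polynomial.coeff_C_mul,
          s18Dc_coeff, s18Dc_coeff, s18Dc_coeff, s18Dc_coeff]
      rw [hσc] at h
      rw [s18R]
      simp only [nsmul_eq_mul] at h ⊢
      push_cast at h ⊢
      linear_combination h
    have hfin : ∀ k, ut.natDegree < k → ut.coeff k = 0 :=
      fun k hk => Polynomial.coeff_eq_zero_of_natDegree_lt hk
    have hall := s18_cascadeU hf hF (fun k => ut.coeff k) ut.natDegree hfin hR0 hRk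
    have hut0 : ut = 0 := Polynomial.ext (fun k => by simpa using hall k)
    rw [hu, hut0, Polynomial.zero_comp]
  -- construct p
  set vt : B := v.comp σ with hvtdef
  have hv : v = vt.comp τ := by
    rw [hvtdef, Polynomial.comp_assoc, s18_sigma_tau, Polynomial.comp_X]
  have hDcvt : s18Dc vt = 0 := by
    apply s18_comp_tau_inj (F := F)
    rw [← hshift vt, ← hv, hDv]
  have hcoeffC : ∀ k, vt.coeff k = Polynomial.C ((vt.coeff k).coeff 0) := by
    intro k
    have hd : dv (vt.coeff k) = 0 := by
      have := congrArg (fun z => Polynomial.coeff z k) hDcvt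
      simpa [s18Dc_coeff] using this
    exact Polynomial.eq_C_of_natDegree_eq_zero
      (Polynomial.natDegree_eq_zero_of_derivative_eq_zero hd)
  refine ⟨vt.map (Polynomial.evalRingHom (0:K)), ?_⟩
  have hmap : (vt.map (Polynomial.evalRingHom (0:K))).map (Polynomial.C : K →+* Polynomial K)
      = vt := by
    apply Polynomial.ext; intro k
    rw [Polynomial.coeff_map, Polynomial.coeff_map]
    conv_rhs => rw [hcoeffC k]
    rw [hcoeffC k]
    simp
  rw [hA0, hu0, map_zero, zero_add, hv, hmap]
  congr 1
  rw [Polynomial.expand_eq_comp_X_pow, Polynomial.comp_assoc]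
  congr 1
  rw [hτdef, Polynomial.sub_comp, Polynomial.X_comp, Polynomial.C_comp]

end Core
end


noncomputable section Transfer
set_option linter.unusedSectionVars false
variable (K : Type*) [Field K] [CharZero K]

def s18fwd : MvPolynomial (Fin 2) K →ₐ[K] Polynomial (Polynomial K) :=
  MvPolynomial.aeval ![Polynomial.C Polynomial.X, Polynomial.X]

def s18inv : Polynomial (Polynomial K) →ₐ[K] MvPolynomial (Fin 2) K :=
  Polynomial.aevalTower (Polynomial.aeval (X 0)) (X 1)

lemma s18fwd_X0 : s18fwd K (X 0) = Polynomial.C Polynomial.X := by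
  simp [s18fwd]

lemma s18fwd_X1 : s18fwd K (X 1) = Polynomial.X := by
  simp [s18fwd]

lemma s18inv_CX : s18inv K (Polynomial.C Polynomial.X) = X 0 := by
  simp [s18inv, Polynomial.aevalTower_C]

lemma s18inv_X : s18inv K (Polynomial.X) = X 1 := by
  simp [s18inv, Polynomial.aevalTower_X]

def s18E : MvPolynomial (Fin 2) K ≃ₐ[K] Polynomial (Polynomial K) :=
  AlgEquiv.ofAlgHom (s18fwd K) (s18inv K)
    (by
      refine AlgHom.ext_of_adjoin_eq_top s18_adjoin ?_
      rintro x (rfl | rfl) <;>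
        simp [s18fwd_X0, s18fwd_X1, s18inv_CX, s18inv_X])
    (by
      apply MvPolynomial.algHom_ext
      intro i
      fin_cases i <;>
        simp [s18fwd_X0, s18fwd_X1, s18inv_CX, s18inv_X])

lemma s18E_X0 : s18E K (X 0) = Polynomial.C Polynomial.X := s18fwd_X0 K
lemma s18E_X1 : s18E K (X 1) = Polynomial.X := s18fwd_X1 K

lemma s18E_aeval (g : Polynomial K) :
    s18E K (Polynomial.aeval (X 0 : MvPolynomial (Fin 2) K) g) = Polynomial.C g := by
  induction g using Polynomial.induction_on' with
  | add p q hp hq => rw [map_add, map_add, hp, hq, map_add]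
  | monomial i c =>
    rw [Polynomial.aeval_monomial, map_mul, map_pow, s18E_X0,
      ← Polynomial.C_mul_X_pow_eq_monomial, map_mul, map_pow]
    congr 1
    show s18E K (algebraMap K _ c) = Polynomial.C (Polynomial.C c)
    rw [AlgEquiv.commutes]
    rfl

/-- transport a derivation along s18E -/
def s18trans (D : Derivation K (MvPolynomial (Fin 2) K) (MvPolynomial (Fin 2) K)) :
    Derivation K (Polynomial (Polynomial K)) (Polynomial (Polynomial K)) where
  toLinearMap := (s18E K).toLinearMap ∘ₗ D.toLinearMap ∘ₗ (s18E K).symm.toLinearMap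
  map_one_eq_zero' := by
    show s18E K (D ((s18E K).symm 1)) = 0
    rw [map_one, Derivation.map_one_eq_zero, map_zero]
  leibniz' a b := by
    show s18E K (D ((s18E K).symm (a * b))) = _
    rw [map_mul, Derivation.leibniz, map_add, smul_eq_mul, smul_eq_mul, map_mul, map_mul,
      AlgEquiv.apply_symm_apply, AlgEquiv.apply_symm_apply, smul_eq_mul, smul_eq_mul]
    rfl

lemma s18trans_apply (D : Derivation K (MvPolynomial (Fin 2) K) (MvPolynomial (Fin 2) K))
    (w : Polynomial (Polynomial K)) :
    s18trans K D w = s18E K (D ((s18E K).symm w)) := rfl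

lemma s18trans_E (D : Derivation K (MvPolynomial (Fin 2) K) (MvPolynomial (Fin 2) K))
    (z : MvPolynomial (Fin 2) K) :
    s18trans K D (s18E K z) = s18E K (D z) := by
  rw [s18trans_apply, AlgEquiv.symm_apply_apply]

lemma s18_aeval_eq_comp (z : Polynomial (Polynomial K)) (p : Polynomial K) :
    Polynomial.aeval z p = (p.map (Polynomial.C : K →+* Polynomial K)).comp z := by
  rw [Polynomial.comp, Polynomial.eval₂_map, Polynomial.aeval_def]
  rfl

end Transfer

/-- main theorem: With `δ(x) = y`, `δ(y) = f`, `deg f ≥ 2`,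
`H = y² - 2∫f dx`, every `K`-derivation `γ` commuting with `δ` equals `q·δ`
for some `q ∈ K[H]`. -/
theorem stmt18 (K : Type*) [Field K] [CharZero K] (f F : Polynomial K)
    (hf : 2 ≤ f.natDegree)
    (hF : Polynomial.derivative F = f) (hF0 : F.coeff 0 = 0)
    (δ γ : Derivation K (MvPolynomial (Fin 2) K) (MvPolynomial (Fin 2) K))
    (hδx : δ (X 0) = X 1)
    (hδy : δ (X 1) = Polynomial.aeval (X 0 : MvPolynomial (Fin 2) K) f)
    (H : MvPolynomial (Fin 2) K)
    (hH : H = X 1 ^ 2 - 2 • Polynomial.aeval (X 0 : MvPolynomial (Fin 2) K) F)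
    (hcomm : ∀ p, δ (γ p) = γ (δ p)) :
    ∃ p : Polynomial K, γ = (Polynomial.aeval H p) • δ := by

  classical
  have hδB : s18trans K δ = s18Δ f := by
    apply s18_der_ext
    · rw [s18trans_apply]
      have h1 : (s18E K).symm (Polynomial.C Polynomial.X) = X 0 :=
        (AlgEquiv.symm_apply_eq _).2 (s18E_X0 K).symm
      rw [h1, hδx, s18E_X1, s18Δ_C, Polynomial.derivative_X, map_one, mul_one]
    · rw [s18trans_apply]
      have h1 : (s18E K).symm (Polynomial.X) = X 1 :=
        (AlgEquiv.symm_apply_eq _).2 (s18E_X1 K).symm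
      rw [h1, hδy, s18E_aeval, s18Δ_X]
  have hEδ : ∀ z, s18E K (δ z) = s18Δ f (s18E K z) := fun z => by rw [← s18trans_E, hδB]
  set A := s18E K (γ (X 0)) with hAdef
  have hγ1 : γ (X 1) = δ (γ (X 0)) := by
    have := hcomm (X 0)
    rw [hδx] at this
    exact this.symm
  have hΔΔ : s18Δ f (s18Δ f A) = Polynomial.C (Polynomial.derivative f) * A := by
    rw [hAdef, ← hEδ, ← hEδ]
    have h2 : δ (δ (γ (X 0))) =
        Polynomial.aeval (X 0 : MvPolynomial (Fin 2) K) (Polynomial.derivative f) * γ (X 0) := by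
      rw [← hγ1, hcomm (X 1), hδy, s18_chain γ]
    rw [h2, map_mul, s18E_aeval]
  obtain ⟨p, hp⟩ := s18_core f F hf hF A hΔΔ
  have hδH : δ H = 0 := by
    have e1 := δ.leibniz_pow (X 1) 2
    have e2 : δ (Polynomial.aeval (X 0 : MvPolynomial (Fin 2) K) F) =
        Polynomial.aeval (X 0 : MvPolynomial (Fin 2) K) f * X 1 := by
      rw [s18_chain δ, hF, hδx]
    rw [hH, map_sub, two_smul, map_add, e2, e1, hδy]
    simp only [pow_one, smul_eq_mul, nsmul_eq_mul, Nat.cast_ofNat]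
    ring
  have hδq : δ (Polynomial.aeval H p) = 0 := by rw [s18_chain δ H p, hδH, mul_zero]
  have hEH : s18E K H = (Polynomial.X : Polynomial (Polynomial K)) ^ 2
      - Polynomial.C (2 * F) := by
    rw [hH, map_sub, map_pow, s18E_X1, two_smul, map_add, s18E_aeval, two_mul, map_add]
  have hγX0 : γ (X 0) = Polynomial.aeval H p * X 1 := by
    apply (s18E K).injective
    rw [map_mul, s18E_X1]
    have hq : s18E K (Polynomial.aeval H p) = Polynomial.aeval (s18E K H) p :=
      (Polynomial.aeval_algHom_apply
        ((s18E K) : MvPolynomial (Fin 2) K →ₐ[K] Polynomial (Polynomial K)) H p).symm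
    rw [← hAdef, hq, hEH, s18_aeval_eq_comp, hp]
    ring
  refine ⟨p, ?_⟩
  apply MvPolynomial.derivation_ext
  intro i
  fin_cases i
  · show γ (X 0) = (Polynomial.aeval H p • δ) (X 0)
    rw [Derivation.smul_apply, smul_eq_mul, hδx]
    exact hγX0
  · show γ (X 1) = (Polynomial.aeval H p • δ) (X 1)
    rw [Derivation.smul_apply, smul_eq_mul, hδy, hγ1, hγX0, Derivation.leibniz, hδq, smul_zero,
      add_zero, smul_eq_mul, hδy]
end
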